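/- arXiv:1906.12133 — 2 statements merged into one kernel-verified Lean document; each statement's English description precedes it below -/
import Mathlib

section
/- For any WSTTS S^sym of a signal σ and a TSWA W, the set of symbolic states reachable from the initial symbolic states, Reach(S^sym), is finite. -/
attribute [local instance] Classical.propDecidable

namespace QTPM

/-- Comparison operators `<, ≤, >, ≥` used in constraints, guards and zones. -/
inductive CmpOp : Type
  | lt | le | gt | ge

/-- Semantics of a comparison operator on reals. -/
def CmpOp.eval : CmpOp → ℝ → ℝ → Prop
  | .lt, a, b => a < b
  | .le, a, b => a ≤ b
  | .gt, a, b => a > b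
  | .ge, a, b => a ≥ b

/-- A semiring `𝕊 = (S, ⊕, ⊗, e⊕, e⊗)`: `(S,⊕,e⊕)` a commutative monoid,
`(S,⊗,e⊗)` a monoid, `⊗` distributing over `⊕` on both sides, `e⊕` absorbing for `⊗`. -/
class CSemiring (S : Type) : Type where
  add : S → S → S
  mul : S → S → S
  zero : S
  one : S
  add_assoc : ∀ a b c : S, add (add a b) c = add a (add b c)
  add_comm : ∀ a b : S, add a b = add b a
  add_zero : ∀ a : S, add a zero = a
  mul_assoc : ∀ a b c : S, mul (mul a b) c = mul a (mul b c)
  mul_one : ∀ a : S, mul a one = a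
  one_mul : ∀ a : S, mul one a = a
  left_distrib : ∀ a b c : S, mul a (add b c) = add (mul a b) (mul a c)
  right_distrib : ∀ a b c : S, mul (add a b) c = add (mul a c) (mul b c)
  zero_mul : ∀ a : S, mul zero a = zero
  mul_zero : ∀ a : S, mul a zero = zero

/-- A semiring is idempotent if `s ⊕ s = s` for every `s`. -/
def Idem (S : Type) [CSemiring S] : Prop := ∀ s : S, CSemiring.add s s = s

/-- The canonical order of a semiring: `s ⪯ s'` iff `s ⊕ s' = s'`. -/
def csLe {S : Type} [CSemiring S] (s s' : S) : Prop := CSemiring.add s s' = s'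

/-- A complete semiring: every (possibly infinite) family has a sum `⊕`, extending the
binary sum, invariant under partitions of the index set, and over which `⊗` distributes
on both sides. -/
class CompleteCSemiring (S : Type) [CSemiring S] : Type 1 where
  iSum : {ι : Type} → (ι → S) → S
  iSum_empty : ∀ f : Empty → S, iSum f = CSemiring.zero
  iSum_single : ∀ f : Unit → S, iSum f = f ()
  iSum_pair : ∀ f : Bool → S, iSum f = CSemiring.add (f true) (f false)
  iSum_partition : ∀ {ι κ : Type} (p : ι → κ) (f : ι → S),
    iSum f = iSum fun k : κ => iSum fun i : {i : ι // p i = k} => f i.1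
  mul_iSum : ∀ {ι : Type} (s : S) (f : ι → S),
    CSemiring.mul s (iSum f) = iSum fun i => CSemiring.mul s (f i)
  iSum_mul : ∀ {ι : Type} (f : ι → S) (s : S),
    CSemiring.mul (iSum f) s = iSum fun i => CSemiring.mul (f i) s

/-- A piecewise-constant signal `σ = a₁^{τ₁} ⋯ a_n^{τ_n}`: a finite list of
(value, duration) pairs with positive durations. -/
structure Signal (X : Type) : Type where
  entries : List ((X → ℝ) × ℝ)
  pos : ∀ e ∈ entries, (0:ℝ) < e.2

namespace Signal

variable {X : Type}

/-- A default entry, used as a fallback value for out-of-range indexing. -/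
noncomputable def dflt (X : Type) : (X → ℝ) × ℝ := (fun _ => 0, 1)

/-- Prefix sums of the durations: `pref σ i = τ₁ + ⋯ + τᵢ`. -/
noncomputable def pref (σ : Signal X) (i : ℕ) : ℝ := ((σ.entries.take i).map Prod.snd).sum

/-- The duration `|σ| = τ₁ + ⋯ + τ_n` of a signal. -/
noncomputable def dur (σ : Signal X) : ℝ := (σ.entries.map Prod.snd).sum

/-- The number `n` of entries of the signal. -/
def len (σ : Signal X) : ℕ := σ.entries.length

/-- The value `a_{i+1}` of the `i`-th entry (0-indexed). -/
noncomputable def val (σ : Signal X) (i : ℕ) : X → ℝ := (σ.entries.getD i (dflt X)).1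

/-- The value `σ(t)` of the signal at time `t`: the value `a_k` where
`τ₁+⋯+τ_{k-1} ≤ t < τ₁+⋯+τ_k`. -/
noncomputable def valAt (σ : Signal X) (t : ℝ) : X → ℝ :=
  σ.val ((List.range σ.len).findIdx fun i => decide (t < σ.pref (i+1)))

end Signal

/-- Stutter-free sequences: the elements of `(ℝ^X)^⊛` (no two equal consecutive values). -/
def StutterFree {V : Type} (l : List V) : Prop := l.Chain' (· ≠ ·)

/-- Absorbing concatenation `∘` of (stutter-free) sequences: concatenate and merge
equal consecutive elements. -/
noncomputable def absCat {V : Type} (l l' : List V) : List V :=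
  List.destutter (· ≠ ·) (l ++ l')

/-- `Values(σ([t,t')))`: the stutter-free sequence of values of `σ` on the
interval `[t,t')`. -/
noncomputable def Signal.valuesOn {X : Type} (σ : Signal X) (t t' : ℝ) : List (X → ℝ) :=
  List.destutter (· ≠ ·)
    (((List.range σ.len).filter fun i => decide (σ.pref i < t' ∧ t < σ.pref (i+1))).map σ.val)

/-- The restriction `σ([t,t'))` of a signal to the interval `[t,t')`. -/
noncomputable def Signal.restrict {X : Type} (σ : Signal X) (t t' : ℝ) : Signal X where
  entries := (List.range σ.len).filterMap fun i =>
    if h : max (σ.pref i) t < min (σ.pref (i+1)) t' then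
      some (σ.val i, min (σ.pref (i+1)) t' - max (σ.pref i) t)
    else none
  pos := by
    intro e he
    rw [List.mem_filterMap] at he
    obtain ⟨i, -, hi⟩ := he
    by_cases h : max (σ.pref i) t < min (σ.pref (i+1)) t'
    · rw [dif_pos h] at hi
      injection hi with h'
      subst h'
      simpa using sub_pos.mpr h
    · rw [dif_neg h] at hi
      exact absurd hi (by simp)

/-- The constant signal `a^t`. -/
noncomputable def constSignal {X : Type} (a : X → ℝ) (t : ℝ) : Signal X where
  entries := if h : (0:ℝ) < t then [(a, t)] else []
  pos := by
    intro e he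
    by_cases h : (0:ℝ) < t
    · rw [dif_pos h] at he
      simp only [List.mem_singleton] at he
      subst he
      exact h
    · rw [dif_neg h] at he
      simp at he

/-- Clock guards: finite conjunctions of `c ⋈ d` with `d ∈ ℤ≥0`. -/
abbrev Guard (C : Type) : Type := List (C × CmpOp × ℕ)

/-- Constraints over the variables `X`: finite conjunctions of `x ⋈ d` with `d ∈ ℝ`. -/
abbrev VarConstraint (X : Type) : Type := List (X × CmpOp × ℝ)

/-- A timed symbolic automaton (TSA) over `ℝ`, with locations `L` and clocks `C`. -/
structure TSA (X L C : Type) : Type where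
  L₀ : Set L
  LF : Set L
  Δ : Set (L × Guard C × Set C × L)
  Δ_finite : Δ.Finite
  Λ : L → VarConstraint X

/-- A timed symbolic weighted automaton (TSWA) over `ℝ` and a complete semiring `S`:
a TSA together with a cost function `κ`. -/
structure TSWA (X L C S : Type) [CSemiring S] [CompleteCSemiring S]
    extends TSA X L C : Type where
  κ : VarConstraint X → List (X → ℝ) → S

/-- Satisfaction `ν ⊨ g` of a clock guard. -/
def guardSat {C : Type} (ν : C → ℝ) (g : Guard C) : Prop :=
  ∀ p ∈ g, p.2.1.eval (ν p.1) (p.2.2 : ℝ)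

/-- The reset `ν[ρ := 0]` of a clock valuation. -/
noncomputable def resetVal {C : Type} (ν : C → ℝ) (ρ : Set C) : C → ℝ :=
  fun c => if c ∈ ρ then 0 else ν c

/-- States of the WTTS: `(l, ν, t, ā)`. -/
abbrev WState (X L C : Type) : Type := L × (C → ℝ) × ℝ × List (X → ℝ)

/-- The state space `Q` of the WTTS of `σ` and a TSWA. -/
def wttsQ {X L C : Type} (σ : Signal X) : Set (WState X L C) :=
  {q | (∀ c, 0 ≤ q.2.1 c) ∧ 0 ≤ q.2.2.1 ∧ q.2.2.1 ≤ σ.dur ∧ StutterFree q.2.2.2}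

/-- The initial states `Q₀ = {(l₀, 0⃗, 0, ε) | l₀ ∈ L₀}` of the WTTS. -/
def wttsQ0 {X L C : Type} (A : TSA X L C) : Set (WState X L C) :=
  {q | q.1 ∈ A.L₀ ∧ q.2.1 = (fun _ => 0) ∧ q.2.2.1 = 0 ∧ q.2.2.2 = []}

/-- The accepting states `Q_F = {(l_F, ν, |σ|, ε) | l_F ∈ L_F}` of the WTTS. -/
def wttsQF {X L C : Type} (σ : Signal X) (A : TSA X L C) : Set (WState X L C) :=
  {q | q.1 ∈ A.LF ∧ (∀ c, 0 ≤ q.2.1 c) ∧ q.2.2.1 = σ.dur ∧ q.2.2.2 = []}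

/-- The transition relation `→` of the WTTS of `σ` and (the TSA of) a TSWA:
either a discrete transition of the TSA, or time elapse. -/
def wttsStep {X L C : Type} (σ : Signal X) (A : TSA X L C)
    (q q' : WState X L C) : Prop :=
  q ∈ wttsQ σ ∧ q' ∈ wttsQ σ ∧
  ((∃ g ρ, (q.1, g, ρ, q'.1) ∈ A.Δ ∧ guardSat q.2.1 g ∧ q'.2.1 = resetVal q.2.1 ρ ∧
      q'.2.2.1 = q.2.2.1 ∧ q.2.2.2 ≠ [] ∧ q'.2.2.2 = []) ∨
   (q.1 = q'.1 ∧ ∃ τ : ℝ, 0 < τ ∧ q'.2.1 = (fun c => q.2.1 c + τ) ∧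
      q'.2.2.1 = q.2.2.1 + τ ∧
      q'.2.2.2 = absCat q.2.2.2 (σ.valuesOn q.2.2.1 (q.2.2.1 + τ))))

/-- The weight of a WTTS transition: `κ(Λ(l), ā)` if `ā' = ε`, and `e⊗` otherwise. -/
noncomputable def wttsWeight {X L C S : Type} [CSemiring S] [CompleteCSemiring S]
    (W : TSWA X L C S) (q q' : WState X L C) : S :=
  if q'.2.2.2 = [] then W.κ (W.Λ q.1) q.2.2.2 else CSemiring.one

/-- A path of a transition system: a finite sequence of states related by
consecutive transitions. -/
def IsPath {Q : Type} (step : Q → Q → Prop) (π : List Q) : Prop := π.Chain' step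

/-- The path value: the `⊗`-product of the weights of the transitions of a path. -/
noncomputable def pathVal {Q S : Type} [CSemiring S] [CompleteCSemiring S]
    (w : Q → Q → S) : List Q → S
  | [] => CSemiring.one
  | [_] => CSemiring.one
  | q :: q' :: r => CSemiring.mul (w q q') (pathVal w (q' :: r))

/-- The set of paths from a state of `A` to a state of `B`. -/
def PathsBetween {Q : Type} (step : Q → Q → Prop) (A B : Set Q) : Set (List Q) :=
  {π | IsPath step π ∧ (∃ a ∈ A, π.head? = some a) ∧ (∃ b ∈ B, π.getLast? = some b)}

/-- The shortest distance from `A` to `B`: the `⊕`-sum, over all paths from `A` to `B`,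
of the `⊗`-product of the transition weights. -/
noncomputable def sDist {Q S : Type} [CSemiring S] [CompleteCSemiring S]
    (step : Q → Q → Prop) (w : Q → Q → S) (A B : Set Q) : S :=
  CompleteCSemiring.iSum fun π : ↥(PathsBetween step A B) => pathVal w π.1

/-- The trace value `α(S)` of the WTTS `S` of `σ` and `W`: the shortest distance from
the initial states to the accepting states, i.e. `⊕_{π ∈ ARuns(S)} μ(π)`. -/
noncomputable def traceValue {X L C S : Type} [CSemiring S] [CompleteCSemiring S]
    (σ : Signal X) (W : TSWA X L C S) : S :=
  sDist (wttsStep σ W.toTSA) (wttsWeight W) (wttsQ0 W.toTSA) (wttsQF σ W.toTSA)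

/-- The clocks `C ⊔ {T}`: `none` is the fresh clock `T` tracking absolute time. -/
abbrev ClockT (C : Type) : Type := Option C

/-- Symbolic states of the WSTTS: `(l, Z, ā)`. -/
abbrev SymState (X L C : Type) : Type := L × Set (ClockT C → ℝ) × List (X → ℝ)

/-- A zone over the clock set `C'`: a set of clock valuations defined by a finite
conjunction of constraints `c ⋈ d` and `c − c' ⋈ d`. -/
def IsZone {C' : Type} (Z : Set (C' → ℝ)) : Prop :=
  ∃ atoms : List ((C' × CmpOp × ℝ) ⊕ (C' × C' × CmpOp × ℝ)),
    Z = {ν | ∀ a ∈ atoms,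
      match a with
      | .inl p => p.2.1.eval (ν p.1) p.2.2
      | .inr p => p.2.2.1.eval (ν p.1 - ν p.2.1) p.2.2.2}

/-- The symbolic state space `Q^sym` of the WSTTS of `σ` and a TSWA. -/
def symQ {X L C : Type} (σ : Signal X) : Set (SymState X L C) :=
  {q | IsZone q.2.1 ∧ q.2.1.Nonempty ∧ (∀ ν ∈ q.2.1, ν none ≤ σ.dur) ∧
    StutterFree q.2.2 ∧
    (q.2.2 = [] ∨ ∀ ν ∈ q.2.1, absCat q.2.2 [σ.valAt (ν none)] = q.2.2)}

/-- The all-zero clock valuation over `C ⊔ {T}`. -/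
noncomputable def zeroValT {C : Type} : ClockT C → ℝ := fun _ => 0

/-- The initial symbolic states `Q₀^sym = {(l₀, {0⃗}, ε) | l₀ ∈ L₀}`. -/
def symQ0 {X L C : Type} (A : TSA X L C) : Set (SymState X L C) :=
  {q | q.1 ∈ A.L₀ ∧ q.2.1 = {zeroValT} ∧ q.2.2 = []}

/-- The accepting symbolic states
`Q_F^sym = {(l_F, Z, ε) ∈ Q^sym | ∃ν ∈ Z, ν(T) = |σ|}`. -/
def symQF {X L C : Type} (σ : Signal X) (A : TSA X L C) : Set (SymState X L C) :=
  {q | q ∈ symQ σ ∧ q.1 ∈ A.LF ∧ q.2.2 = [] ∧ ∃ ν ∈ q.2.1, ν none = σ.dur}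

/-- The reset `ν[ρ := 0]` of a valuation over `C ⊔ {T}` (the clock `T` is never reset). -/
noncomputable def symResetVal {C : Type} (ν : ClockT C → ℝ) (ρ : Set C) : ClockT C → ℝ :=
  fun c => match c with
    | none => ν none
    | some c' => if c' ∈ ρ then 0 else ν (some c')

/-- The up-closure `{ν + τ | ν ∈ Z, τ > 0}` of a zone under time elapse. -/
def upClosure {C : Type} (Z : Set (ClockT C → ℝ)) : Set (ClockT C → ℝ) :=
  {ν' | ∃ ν ∈ Z, ∃ τ : ℝ, 0 < τ ∧ ν' = fun c => ν c + τ}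

/-- The transition relation `→^sym` of the WSTTS of `σ` and (the TSA of) a TSWA:
a discrete transition of the TSA, a punctual time elapse, or a non-punctual time elapse. -/
def symStep {X L C : Type} (σ : Signal X) (A : TSA X L C)
    (q q' : SymState X L C) : Prop :=
  q ∈ symQ σ ∧ q' ∈ symQ σ ∧
  ((∃ g ρ, (q.1, g, ρ, q'.1) ∈ A.Δ ∧
      q'.2.1 = {ν' | ∃ ν ∈ q.2.1, guardSat (fun c => ν (some c)) g ∧ ν' = symResetVal ν ρ} ∧
      q.2.2 ≠ [] ∧ q'.2.2 = []) ∨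
   (q.1 = q'.1 ∧
      (∃ ν ∈ q.2.1, ∃ ν' ∈ q'.2.1, q'.2.2 = absCat q.2.2 (σ.valuesOn (ν none) (ν' none))) ∧
      (∃ i, 1 ≤ i ∧ i ≤ σ.len ∧
        (q'.2.1 = upClosure q.2.1 ∩ {ν | ν none = σ.pref i} ∨
         q'.2.1 = upClosure q.2.1 ∩ {ν | σ.pref (i-1) < ν none ∧ ν none < σ.pref i}))))

/-- The weight of a WSTTS transition: `κ(Λ(l), ā)` if `ā' = ε`, and `e⊗` otherwise. -/
noncomputable def symWeight {X L C S : Type} [CSemiring S] [CompleteCSemiring S]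
    (W : TSWA X L C S) (q q' : SymState X L C) : S :=
  if q'.2.2 = [] then W.κ (W.Λ q.1) q.2.2 else CSemiring.one

/-- The symbolic trace value `α^sym(S^sym)`: the shortest distance from the initial
symbolic states to the accepting symbolic states, i.e. `⊕_{π ∈ ARuns(S^sym)} μ^sym(π)`. -/
noncomputable def symTraceValue {X L C S : Type} [CSemiring S] [CompleteCSemiring S]
    (σ : Signal X) (W : TSWA X L C S) : S :=
  sDist (symStep σ W.toTSA) (symWeight W) (symQ0 W.toTSA) (symQF σ W.toTSA)

/-- `Reach`: the initial states together with all states reachable from them. -/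
def reach {Q : Type} (step : Q → Q → Prop) (init : Set Q) : Set Q :=
  {q | ∃ q0 ∈ init, Relation.ReflTransGen step q0 q}

/-- Tuples `(l, Z, ā, s)` occurring in intermediate weights. -/
abbrev WTuple (X L C S : Type) : Type := L × Set (ClockT C → ℝ) × List (X → ℝ) × S

/-- The increment function `incr(a,t)`: maps a set `w` of tuples `(l,Z,ā,s)` to the set
of tuples `(l',Z',ā',s')` such that every `ν' ∈ Z'` satisfies `ν'(T) = t` and
`s' = ⊕_{(l,Z,ā,s)∈w} s ⊗ Dist({(l,Z,ā)},{(l',Z',ā')})` computed in the WSTTS of the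
constant signal `a^t` and `W`. -/
noncomputable def incr {X L C S : Type} [CSemiring S] [CompleteCSemiring S]
    (W : TSWA X L C S) (a : X → ℝ) (t : ℝ)
    (w : Set (WTuple X L C S)) : Set (WTuple X L C S) :=
  {p | IsZone p.2.1 ∧ StutterFree p.2.2.1 ∧ (∀ ν ∈ p.2.1, ν none = t) ∧
    p.2.2.2 = CompleteCSemiring.iSum fun q : ↥w =>
      CSemiring.mul q.1.2.2.2
        (sDist (symStep (constSignal a t) W.toTSA) (symWeight W)
          ({(q.1.1, q.1.2.1, q.1.2.2.1)} : Set (SymState X L C))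
          ({(p.1, p.2.1, p.2.2.1)} : Set (SymState X L C)))}

/-- The intermediate weight `weight_i = (incr(a_i,T_i) ∘ ⋯ ∘ incr(a₁,T₁))
({(l₀,{0⃗},ε,e⊗) | l₀ ∈ L₀})`, where `T_j = τ₁ + ⋯ + τ_j`. -/
noncomputable def weightSeq {X L C S : Type} [CSemiring S] [CompleteCSemiring S]
    (σ : Signal X) (W : TSWA X L C S) : ℕ → Set (WTuple X L C S)
  | 0 => {p | p.1 ∈ W.L₀ ∧ p.2.1 = {zeroValT} ∧ p.2.2.1 = [] ∧ p.2.2.2 = CSemiring.one}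
  | i + 1 => incr W (σ.val i) (σ.pref (i+1)) (weightSeq σ W i)

/-- The extension of a clock valuation over `C` to `C ⊔ {T}`, assigning `t` to `T`. -/
def extT {C : Type} (ν : C → ℝ) (t : ℝ) : ClockT C → ℝ :=
  fun c => match c with
    | none => t
    | some c' => ν c'

/-- The restriction `ν|_C` of a clock valuation over `C ⊔ {T}` to `C`. -/
def restrC {C : Type} (ν : ClockT C → ℝ) : C → ℝ := fun c => ν (some c)

/-- The extension of a clock valuation over `C ⊔ {T}` to `C ⊔ {T, 0}`, where the
reference clock `0` (encoded as `none`) has constant value `0`. -/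
def extRef {C : Type} (ν : ClockT C → ℝ) : Option (ClockT C) → ℝ :=
  fun c => match c with
    | none => 0
    | some c' => ν c'

/-- The canonical bound `d_{Z,c,c'}` of a zone: the least constant bounding
`ν(c) − ν(c')` over `Z` (with `∞ = ⊤` when unbounded). -/
noncomputable def zoneBound {C : Type} (Z : Set (ClockT C → ℝ))
    (c c' : Option (ClockT C)) : EReal :=
  sSup ((fun ν => ((extRef ν c - extRef ν c' : ℝ) : EReal)) '' Z)

end QTPM

/-!
The location component is finite, so it suffices to bound the zones and the words.

The word collects values of `σ`. Within one open stripe of `T` the absorbing concatenation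
absorbs the new value, so the length of the word grows only when `T` moves to a later stripe,
and it stays bounded.

A zone is determined by its canonical bounds `sup_{ν ∈ Z} (x_u - x_v)` over the clocks
`C ⊔ {T, 0}` and by which of them are attained. The bounds evolve in closed form: a guard or
a stripe constraint adds one edge to the difference-bound matrix and tightens it, a reset
relabels it, and time elapse shifts the entries against the reference clock `0` by the
extreme reachable values of `T`. Guards carry integers and stripes carry prefix sums
`τ₁ + ⋯ + τⱼ` which only constrain `T`; so along every run each bound is an integer or a sum
of an entry of the column of `T` (of the form `k - pref j`) and an entry of its row (of the
form `pref j + k`). All clocks stay in `[0, |σ|]`, so each bound lies in the finite set of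
numbers `pref j - pref j' + k` of absolute value at most `|σ|`.
-/

namespace QTPM

variable {X C : Type}

namespace Signal

variable (σ : Signal X)

theorem pref_zero : σ.pref 0 = 0 := by simp [pref]

theorem pref_succ {i : ℕ} (hi : i < σ.len) : σ.pref (i + 1) = σ.pref i + (σ.entries[i]'hi).2 := by
  unfold pref
  rw [List.map_take, List.map_take, List.sum_take_succ (p := by simpa [len] using hi)]
  simp only [List.getElem_map]
  rfl

theorem pref_lt_pref_succ {i : ℕ} (hi : i < σ.len) : σ.pref i < σ.pref (i + 1) := by
  rw [σ.pref_succ hi]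
  linarith [σ.pos _ (List.getElem_mem hi)]

theorem pref_of_len_le {i : ℕ} (hi : σ.len ≤ i) : σ.pref i = σ.dur := by
  unfold pref dur
  rw [List.take_of_length_le (by simpa [len] using hi)]

theorem pref_mono : Monotone σ.pref := by
  refine monotone_nat_of_le_succ fun i => ?_
  rcases lt_or_ge i σ.len with h | h
  · exact (σ.pref_lt_pref_succ h).le
  · rw [σ.pref_of_len_le h, σ.pref_of_len_le (h.trans i.le_succ)]

theorem pref_nonneg (i : ℕ) : 0 ≤ σ.pref i := σ.pref_zero ▸ σ.pref_mono i.zero_le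

theorem pref_le_dur (i : ℕ) : σ.pref i ≤ σ.dur := by
  rw [← σ.pref_of_len_le le_rfl]
  rcases le_or_gt σ.len i with h | h
  · rw [σ.pref_of_len_le h, σ.pref_of_len_le le_rfl]
  · exact σ.pref_mono h.le

theorem dur_nonneg : 0 ≤ σ.dur := (σ.pref_nonneg 0).trans (σ.pref_le_dur 0)

theorem pref_lt_pref_iff {i j : ℕ} (hj : j ≤ σ.len) : σ.pref i < σ.pref j ↔ i < j := by
  refine ⟨fun h => lt_of_not_ge fun hji => (σ.pref_mono hji).not_gt h, fun h => ?_⟩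
  calc σ.pref i ≤ σ.pref (j - 1) := σ.pref_mono (by omega)
    _ < σ.pref (j - 1 + 1) := σ.pref_lt_pref_succ (by omega)
    _ = σ.pref j := by rw [Nat.sub_add_cancel (by omega)]

end Signal

/-! ### Difference-bound matrices -/

/-- The index set `C ⊔ {T, 0}` of difference-bound matrices: `none` is the reference clock `0`
(see `extRef`) and `some none` is `T`. -/
abbrev Node (C : Type) : Type := Option (ClockT C)

abbrev tNode : Node C := some none

def diff (ν : ClockT C → ℝ) (u v : Node C) : ℝ := extRef ν u - extRef ν v

/-- `zoneBound` with values in `ℝ`; its junk value `sSup ∅ = 0` never matters, since it is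
only used on nonempty sets with bounded differences. -/
noncomputable def bound (Z : Set (ClockT C → ℝ)) (u v : Node C) : ℝ :=
  sSup ((diff · u v) '' Z)

def BoundAttained (Z : Set (ClockT C → ℝ)) (u v : Node C) : Prop :=
  ∃ ν ∈ Z, diff ν u v = bound Z u v

def DiffsBddAbove (Z : Set (ClockT C → ℝ)) : Prop := ∀ u v, BddAbove ((diff · u v) '' Z)

theorem DiffsBddAbove.mono {A B : Set (ClockT C → ℝ)} (hB : DiffsBddAbove B) (hAB : A ⊆ B) :
    DiffsBddAbove A :=
  fun u v => (hB u v).mono (Set.image_mono hAB)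

def Boxed (d : ℝ) (Z : Set (ClockT C → ℝ)) : Prop :=
  ∀ ν ∈ Z, (∀ c, 0 ≤ ν c ∧ ν c ≤ ν none) ∧ ν none ≤ d

section Bounds

variable {Z : Set (ClockT C → ℝ)}

@[simp] theorem diff_self (ν : ClockT C → ℝ) (u : Node C) : diff ν u u = 0 := sub_self _

theorem diff_add_diff (ν : ClockT C → ℝ) (u v w : Node C) :
    diff ν u v + diff ν v w = diff ν u w := by
  unfold diff; ring

theorem diff_swap (ν : ClockT C → ℝ) (u v : Node C) : diff ν v u = -diff ν u v := by
  unfold diff; ring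

theorem Boxed.abs_diff_le {d : ℝ} (hB : Boxed d Z) {ν : ClockT C → ℝ} (hν : ν ∈ Z)
    (u v : Node C) : |diff ν u v| ≤ d := by
  obtain ⟨hc, hT⟩ := hB ν hν
  have hext : ∀ x : Node C, 0 ≤ extRef ν x ∧ extRef ν x ≤ ν none := fun
    | none => ⟨le_rfl, (hc none).1⟩
    | some c => hc c
  obtain ⟨hu0, hu1⟩ := hext u
  obtain ⟨hv0, hv1⟩ := hext v
  rw [abs_le]
  constructor <;> (unfold diff; linarith)

theorem Boxed.diffsBddAbove {d : ℝ} (hB : Boxed d Z) : DiffsBddAbove Z := fun u v =>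
  ⟨d, by rintro _ ⟨ν, hν, rfl⟩; exact (abs_le.mp (hB.abs_diff_le hν u v)).2⟩

theorem le_bound (hbdd : DiffsBddAbove Z) {ν : ClockT C → ℝ} (hν : ν ∈ Z) (u v : Node C) :
    diff ν u v ≤ bound Z u v :=
  le_csSup (hbdd u v) ⟨ν, hν, rfl⟩

theorem bound_le (hne : Z.Nonempty) {u v : Node C} {b : ℝ} (h : ∀ ν ∈ Z, diff ν u v ≤ b) :
    bound Z u v ≤ b :=
  csSup_le (hne.image _) (by rintro _ ⟨ν, hν, rfl⟩; exact h ν hν)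

theorem zero_le_bound_add (hbdd : DiffsBddAbove Z)
    {ν : ClockT C → ℝ} (hν : ν ∈ Z) {a b : Node C} {w : ℝ} (h : diff ν a b ≤ w) :
    0 ≤ bound Z b a + w := by
  have := le_bound hbdd hν b a
  rw [diff_swap] at this
  linarith

theorem Boxed.abs_bound_le {d : ℝ} (hB : Boxed d Z) (hne : Z.Nonempty) (u v : Node C) :
    |bound Z u v| ≤ d := by
  obtain ⟨ν, hν⟩ := hne
  have h := abs_le.mp (hB.abs_diff_le hν u v)
  refine abs_le.mpr ⟨h.1.trans (le_bound hB.diffsBddAbove hν u v), bound_le ⟨ν, hν⟩ ?_⟩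
  exact fun μ hμ => (abs_le.mp (hB.abs_diff_le hμ u v)).2

theorem bound_eq_of_isLUB (hne : Z.Nonempty) {u v : Node C} {b : ℝ}
    (h : IsLUB ((diff · u v) '' Z) b) : bound Z u v = b :=
  h.csSup_eq (hne.image _)

end Bounds

structure IsClosedDBM (M : Node C → Node C → ℝ) : Prop where
  diag : ∀ x, M x x = 0
  triangle : ∀ x y z, M x z ≤ M x y + M y z

theorem isClosedDBM_bound {Z : Set (ClockT C → ℝ)} (hne : Z.Nonempty) (hbdd : DiffsBddAbove Z) :
    IsClosedDBM (bound Z) where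
  diag x := le_antisymm (bound_le hne fun ν _ => (diff_self ν x).le)
    (by obtain ⟨ν, hν⟩ := hne; simpa using le_bound hbdd hν x x)
  triangle x y z := bound_le hne fun ν hν => by
    rw [← diff_add_diff ν x y z]
    exact add_le_add (le_bound hbdd hν x y) (le_bound hbdd hν y z)

/-- Adding the constraint `x_a - x_b ≤ w` to a closed matrix. -/
def tighten (M : Node C → Node C → ℝ) (a b : Node C) (w : ℝ) : Node C → Node C → ℝ :=
  fun u v => min (M u v) (M u a + w + M b v)

namespace IsClosedDBM

variable {M : Node C → Node C → ℝ}

theorem tighten (hM : IsClosedDBM M) {a b : Node C} {w : ℝ} (hw : 0 ≤ M b a + w) :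
    IsClosedDBM (QTPM.tighten M a b w) where
  diag x := by
    have := hM.triangle b x a
    exact (min_eq_left (by rw [hM.diag]; linarith)).trans (hM.diag x)
  triangle x y z := by
    have hxya := hM.triangle x y a
    have hbyz := hM.triangle b y z
    have hbya := hM.triangle b y a
    unfold QTPM.tighten
    rcases min_cases (M x y) (M x a + w + M b y) with ⟨e1, -⟩ | ⟨e1, -⟩ <;>
      rcases min_cases (M y z) (M y a + w + M b z) with ⟨e2, -⟩ | ⟨e2, -⟩ <;> rw [e1, e2]
    · exact min_le_of_left_le (hM.triangle x y z)
    · exact min_le_of_right_le (by linarith)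
    · exact min_le_of_right_le (by linarith)
    · exact min_le_of_right_le (by linarith)

theorem exists_diff_eq (hM : IsClosedDBM M) (v : Node C) :
    ∃ ν : ClockT C → ℝ, (∀ x y, diff ν x y ≤ M x y) ∧ ∀ u, diff ν u v = M u v := by
  refine ⟨fun c => M (some c) v - M none v, ?_⟩
  have hdiff : ∀ x y, diff (fun c => M (some c) v - M none v) x y = M x v - M y v := by
    intro x y
    cases x <;> cases y <;> simp [diff, extRef]
  refine ⟨fun x y => ?_, fun u => ?_⟩
  · rw [hdiff]; linarith [hM.triangle x y v]
  · rw [hdiff, hM.diag, sub_zero]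

end IsClosedDBM

/-! ### Zones -/

abbrev ZoneAtom (C : Type) : Type := (ClockT C × CmpOp × ℝ) ⊕ (ClockT C × ClockT C × CmpOp × ℝ)

def ZoneAtom.Holds (a : ZoneAtom C) (ν : ClockT C → ℝ) : Prop :=
  match a with
  | .inl p => p.2.1.eval (ν p.1) p.2.2
  | .inr p => p.2.2.1.eval (ν p.1 - ν p.2.1) p.2.2.2

section Zones

variable {Z : Set (ClockT C → ℝ)}

theorem isZone_iff : IsZone Z ↔ ∃ atoms : List (ZoneAtom C), Z = {ν | ∀ a ∈ atoms, a.Holds ν} := by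
  unfold IsZone ZoneAtom.Holds
  constructor <;> rintro ⟨atoms, rfl⟩ <;> refine ⟨atoms, ?_⟩ <;> ext ν <;>
    constructor <;> (intro h a ha; have := h a ha; revert this; cases a <;> simp)

theorem IsZone.inter_atom (hZ : IsZone Z) (c : ClockT C) (op : CmpOp) (d : ℝ) :
    IsZone (Z ∩ {ν | op.eval (ν c) d}) := by
  obtain ⟨atoms, rfl⟩ := isZone_iff.mp hZ
  exact isZone_iff.mpr ⟨.inl (c, op, d) :: atoms, by ext ν; simp [ZoneAtom.Holds, and_comm]⟩

theorem ZoneAtom.holds_iff (a : ZoneAtom C) : ∃ u v : Node C, ∃ d : ℝ,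
    (∀ ν, a.Holds ν ↔ diff ν u v ≤ d) ∨ (∀ ν, a.Holds ν ↔ diff ν u v < d) := by
  rcases a with ⟨c, op, d⟩ | ⟨c, c', op, d⟩ <;> cases op
  · exact ⟨some c, none, d, .inr fun ν => by simp [Holds, CmpOp.eval, diff, extRef]⟩
  · exact ⟨some c, none, d, .inl fun ν => by simp [Holds, CmpOp.eval, diff, extRef]⟩
  · exact ⟨none, some c, -d, .inr fun ν => by simp [Holds, CmpOp.eval, diff, extRef]⟩
  · exact ⟨none, some c, -d, .inl fun ν => by simp [Holds, CmpOp.eval, diff, extRef]⟩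
  · exact ⟨some c, some c', d, .inr fun ν => by simp [Holds, CmpOp.eval, diff, extRef]⟩
  · exact ⟨some c, some c', d, .inl fun ν => by simp [Holds, CmpOp.eval, diff, extRef]⟩
  · refine ⟨some c', some c, -d, .inr fun ν => ?_⟩
    simp only [Holds, CmpOp.eval, diff, extRef]; constructor <;> intro h <;> linarith
  · refine ⟨some c', some c, -d, .inl fun ν => ?_⟩
    simp only [Holds, CmpOp.eval, diff, extRef]; constructor <;> intro h <;> linarith

theorem diff_interp (w ν : ClockT C → ℝ) (θ : ℝ) (u v : Node C) :
    diff (θ • w + (1 - θ) • ν) u v = θ * diff w u v + (1 - θ) * diff ν u v := by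
  cases u <;> cases v <;> simp [diff, extRef] <;> ring

theorem IsZone.interp_mem (hZ : IsZone Z) {w ν : ClockT C → ℝ} (hw : w ∈ Z)
    (hν : ∀ u v, diff ν u v ≤ bound Z u v) {θ : ℝ} (hθ0 : 0 < θ) (hθ1 : θ ≤ 1) :
    θ • w + (1 - θ) • ν ∈ Z := by
  obtain ⟨atoms, hZat⟩ := isZone_iff.mp hZ
  have hZa : ∀ μ ∈ Z, ∀ a ∈ atoms, a.Holds μ := fun μ hμ => by rw [hZat] at hμ; exact hμ
  rw [hZat]
  intro a ha
  obtain ⟨u, v, d, h | h⟩ := a.holds_iff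
  · have hb := bound_le ⟨w, hw⟩ fun μ hμ => (h μ).1 (hZa μ hμ a ha)
    have hwd := (h w).1 (hZa w hw a ha)
    rw [h, diff_interp]
    nlinarith [hν u v]
  · have hb := bound_le ⟨w, hw⟩ fun μ hμ => ((h μ).1 (hZa μ hμ a ha)).le
    have hwd := (h w).1 (hZa w hw a ha)
    rw [h, diff_interp]
    nlinarith [hν u v]

theorem le_of_forall_interp_le {x y S : ℝ}
    (h : ∀ θ : ℝ, 0 < θ → θ ≤ 1 → θ * y + (1 - θ) * x ≤ S) : x ≤ S := by
  by_contra! hx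
  have hy : y ≤ S := by simpa using h 1 one_pos le_rfl
  have hθ := h ((x - S) / (2 * (x - y))) (div_pos (by linarith) (by linarith))
    ((div_le_one (by linarith)).mpr (by linarith))
  have hxy : x - y ≠ 0 := by linarith
  have hval :
      (x - S) / (2 * (x - y)) * y + (1 - (x - S) / (2 * (x - y))) * x = x - (x - S) / 2 := by
    field_simp
    ring
  linarith

theorem bound_eq_of_interp {A B : Set (ClockT C → ℝ)} (hAB : A ⊆ B) (hA : A.Nonempty)
    (hbddB : DiffsBddAbove B)
    (hinterp : ∀ ν ∈ B, ∀ w ∈ A, ∀ θ : ℝ, 0 < θ → θ ≤ 1 → θ • w + (1 - θ) • ν ∈ A)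
    (u v : Node C) : bound A u v = bound B u v := by
  have hbddA : DiffsBddAbove A := hbddB.mono hAB
  refine le_antisymm (csSup_le_csSup (hbddB u v) (hA.image _) (Set.image_mono hAB)) ?_
  obtain ⟨w, hw⟩ := hA
  refine bound_le ⟨w, hAB hw⟩ fun ν hν => le_of_forall_interp_le (y := diff w u v) fun θ h0 h1 => ?_
  rw [← diff_interp]
  exact le_bound hbddA (hinterp ν hν w hw θ h0 h1) u v

theorem IsZone.bound_inter_eq_tighten (hZ : IsZone Z) (hbdd : DiffsBddAbove Z)
    {H : Set (ClockT C → ℝ)} {a b : Node C} {w : ℝ} (hH : ∀ ν ∈ H, diff ν a b ≤ w)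
    (hHinterp : ∀ w' ∈ H, ∀ ν, diff ν a b ≤ w → ∀ θ : ℝ, 0 < θ → θ ≤ 1 →
      θ • w' + (1 - θ) • ν ∈ H)
    (hne : (Z ∩ H).Nonempty) : bound (Z ∩ H) = tighten (bound Z) a b w := by
  obtain ⟨ν₁, hν₁Z, hν₁H⟩ := id hne
  have hM : IsClosedDBM (bound Z) := isClosedDBM_bound ⟨ν₁, hν₁Z⟩ hbdd
  have hcyc : 0 ≤ bound Z b a + w := zero_le_bound_add hbdd hν₁Z (hH ν₁ hν₁H)
  -- `Z ∩ H` is dense in the closed set `B` cut out by its bounds, which realises `tighten`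
  let B : Set (ClockT C → ℝ) := {ν | (∀ x y, diff ν x y ≤ bound Z x y) ∧ diff ν a b ≤ w}
  have hbddB : DiffsBddAbove B := fun x y => ⟨bound Z x y, by rintro _ ⟨ν, hν, rfl⟩; exact hν.1 x y⟩
  have hdense : ∀ x y, bound (Z ∩ H) x y = bound B x y :=
    bound_eq_of_interp (fun ν hν => ⟨fun x y => le_bound hbdd hν.1 x y, hH ν hν.2⟩)
      hne hbddB fun ν hν w' hw' θ h0 h1 =>
        ⟨hZ.interp_mem hw'.1 hν.1 h0 h1, hHinterp w' hw'.2 ν hν.2 θ h0 h1⟩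
  funext u v
  simp only [tighten]
  refine le_antisymm (le_min (bound_le hne fun ν hν => le_bound hbdd hν.1 u v)
    (bound_le hne fun ν hν => ?_)) ?_
  · rw [← diff_add_diff ν u a v, ← diff_add_diff ν a b v]
    linarith [le_bound hbdd hν.1 u a, hH ν hν.2, le_bound hbdd hν.1 b v]
  · obtain ⟨ν₀, hν₀, hν₀v⟩ := (hM.tighten hcyc).exists_diff_eq v
    have hν₀B : ν₀ ∈ B := by
      refine ⟨fun x y => (hν₀ x y).trans (min_le_left _ _), (hν₀ a b).trans ?_⟩
      exact (min_le_right _ _).trans (by rw [hM.diag, hM.diag, add_zero, zero_add])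
    rw [hdense]
    exact (hν₀v u).symm.trans_le (le_bound hbddB hν₀B u v)

theorem IsZone.bound_inter_upper (hZ : IsZone Z) (hbdd : DiffsBddAbove Z) {c : ClockT C}
    {op : CmpOp} (hop : op = .lt ∨ op = .le) {d : ℝ}
    (hne : (Z ∩ {ν | op.eval (ν c) d}).Nonempty) :
    bound (Z ∩ {ν | op.eval (ν c) d}) = tighten (bound Z) (some c) none d := by
  refine hZ.bound_inter_eq_tighten hbdd (fun ν hν => ?_) (fun w' hw' ν hν θ h0 h1 => ?_) hne <;>
    rcases hop with rfl | rfl <;> simp [CmpOp.eval, diff, extRef] at * <;> nlinarith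

theorem IsZone.bound_inter_lower (hZ : IsZone Z) (hbdd : DiffsBddAbove Z) {c : ClockT C}
    {op : CmpOp} (hop : op = .gt ∨ op = .ge) {d : ℝ}
    (hne : (Z ∩ {ν | op.eval (ν c) d}).Nonempty) :
    bound (Z ∩ {ν | op.eval (ν c) d}) = tighten (bound Z) none (some c) (-d) := by
  refine hZ.bound_inter_eq_tighten hbdd (fun ν hν => ?_) (fun w' hw' ν hν θ h0 h1 => ?_) hne <;>
    rcases hop with rfl | rfl <;> simp [CmpOp.eval, diff, extRef] at * <;> nlinarith

def dbmSet (M : Node C → Node C → ℝ) (A : Node C → Node C → Prop) : Set (ClockT C → ℝ) :=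
  {ν | ∀ u v, diff ν u v ≤ M u v ∧ (¬ A u v → diff ν u v < M u v)}

theorem IsZone.eq_dbmSet (hZ : IsZone Z) (hne : Z.Nonempty) (hbdd : DiffsBddAbove Z) :
    Z = dbmSet (bound Z) (BoundAttained Z) := by
  ext ν
  refine ⟨fun hν u v => ⟨le_bound hbdd hν u v, fun hA =>
    (le_bound hbdd hν u v).lt_of_ne fun h => hA ⟨ν, hν, h⟩⟩, fun hν => ?_⟩
  obtain ⟨atoms, hZat⟩ := isZone_iff.mp hZ
  have hZa : ∀ μ ∈ Z, ∀ a ∈ atoms, a.Holds μ := fun μ hμ => by rw [hZat] at hμ; exact hμ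
  rw [hZat]
  intro a ha
  obtain ⟨u, v, d, h | h⟩ := a.holds_iff
  · exact (h ν).2 ((hν u v).1.trans (bound_le hne fun μ hμ => (h μ).1 (hZa μ hμ a ha)))
  · refine (h ν).2 ?_
    rcases (bound_le hne fun μ hμ => ((h μ).1 (hZa μ hμ a ha)).le).lt_or_eq with hb | hb
    · exact (hν u v).1.trans_lt hb
    · refine hb ▸ (hν u v).2 ?_
      rintro ⟨μ, hμ, hμb⟩
      exact ((h μ).1 (hZa μ hμ a ha)).ne (hμb.trans hb)

end Zones

/-! ### The shape of reachable bounds -/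

def IsIntSubPref (σ : Signal X) (x : ℝ) : Prop := ∃ k : ℤ, ∃ j ≤ σ.len, x = k - σ.pref j

def IsPrefAddInt (σ : Signal X) (x : ℝ) : Prop := ∃ k : ℤ, ∃ j ≤ σ.len, x = σ.pref j + k

theorem IsIntSubPref.int_add {σ : Signal X} {x : ℝ} (h : IsIntSubPref σ x) (k : ℤ) :
    IsIntSubPref σ (k + x) := by
  obtain ⟨k', j, hj, rfl⟩ := h
  exact ⟨k + k', j, hj, by push_cast; ring⟩

theorem IsPrefAddInt.add_int {σ : Signal X} {x : ℝ} (h : IsPrefAddInt σ x) (k : ℤ) :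
    IsPrefAddInt σ (x + k) := by
  obtain ⟨k', j, hj, rfl⟩ := h
  exact ⟨k' + k, j, hj, by push_cast; ring⟩

structure IsSignalDBM (σ : Signal X) (M : Node C → Node C → ℝ) : Prop where
  col : ∀ u, IsIntSubPref σ (M u tNode)
  row : ∀ v, IsPrefAddInt σ (M tNode v)
  split : ∀ u v, M u v = M u tNode + M tNode v ∨ ∃ k : ℤ, M u v = k

def IsAdmissibleEdge (σ : Signal X) (a b : Node C) (w : ℝ) : Prop :=
  (a = tNode ∧ IsPrefAddInt σ w) ∨ (b = tNode ∧ IsIntSubPref σ w) ∨ ∃ k : ℤ, w = k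

theorem min_mem_of_le_or {α : Type*} [LinearOrder α] {p : α → Prop} {x y : α} (hx : p x) (hy : x ≤ y ∨ p y) :
    p (min x y) := by
  rcases hy with h | h
  · rwa [min_eq_left h]
  · exact min_rec' p hx h

namespace IsSignalDBM

variable {σ : Signal X} {M : Node C → Node C → ℝ}

theorem tighten (hM : IsSignalDBM σ M) (hMc : IsClosedDBM M) {a b : Node C} {w : ℝ}
    (he : IsAdmissibleEdge σ a b w) (hcyc : 0 ≤ M b a + w) :
    IsSignalDBM σ (QTPM.tighten M a b w) := by
  have hcycT : 0 ≤ M tNode a + w + M b tNode := by linarith [hMc.triangle b tNode a]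
  have hTT := hMc.diag tNode
  refine ⟨fun u => min_mem_of_le_or (hM.col u) ?_, fun v => min_mem_of_le_or (hM.row v) ?_,
    fun u v => ?_⟩
  · rcases he with ⟨rfl, -⟩ | ⟨rfl, hw⟩ | ⟨k, rfl⟩
    · exact .inl (by linarith)
    · rcases hM.split u a with hs | ⟨k, hk⟩
      · exact .inl (by linarith)
      · exact .inr (by rw [hk, hTT, add_zero]; exact hw.int_add k)
    · rcases hM.split u a with hs | ⟨k', hk⟩
      · exact .inl (by linarith)
      · refine .inr ?_
        rw [hk, show (k' : ℝ) + k + M b tNode = ((k' + k : ℤ) : ℝ) + M b tNode by push_cast; ring]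
        exact (hM.col b).int_add _
  · rcases he with ⟨rfl, hw⟩ | ⟨rfl, -⟩ | ⟨k, rfl⟩
    · rcases hM.split b v with hs | ⟨k, hk⟩
      · exact .inl (by linarith)
      · exact .inr (by rw [hk, hTT, zero_add]; exact hw.add_int k)
    · exact .inl (by linarith)
    · rcases hM.split b v with hs | ⟨k', hk⟩
      · exact .inl (by linarith)
      · refine .inr ?_
        rw [hk, show M tNode a + k + k' = M tNode a + ((k + k' : ℤ) : ℝ) by push_cast; ring]
        exact (hM.row a).add_int _
  · set M' := QTPM.tighten M a b w
    have htri := (hMc.tighten hcyc).triangle u tNode v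
    have hu : M' u tNode ≤ M u tNode ∧ M' u tNode ≤ M u a + w + M b tNode :=
      ⟨min_le_left _ _, min_le_right _ _⟩
    have hv : M' tNode v ≤ M tNode v ∧ M' tNode v ≤ M tNode a + w + M b v :=
      ⟨min_le_left _ _, min_le_right _ _⟩
    suffices M' u tNode + M' tNode v ≤ M' u v ∨ ∃ k : ℤ, M' u v = k by
      exact this.imp_left fun h => le_antisymm htri h
    have huv : M' u v = min (M u v) (M u a + w + M b v) := rfl
    rcases min_cases (M u v) (M u a + w + M b v) with ⟨he', -⟩ | ⟨he', -⟩ <;> rw [huv, he']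
    · exact (hM.split u v).imp_left fun hs => by linarith
    · -- a path through the edge that also passes through `T` is no shorter than via `T` alone
      have hleft : M u a = M u tNode + M tNode a → M' u tNode + M' tNode v ≤ M u a + w + M b v :=
        fun hs => by linarith
      have hright : M b v = M b tNode + M tNode v →
          M' u tNode + M' tNode v ≤ M u a + w + M b v := fun hs => by linarith
      rcases he with ⟨rfl, -⟩ | ⟨rfl, -⟩ | ⟨k, rfl⟩
      · exact .inl (hleft (by rw [hTT, add_zero]))
      · exact .inl (hright (by rw [hTT, zero_add]))
      · rcases hM.split u a with hs | ⟨k₁, hk₁⟩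
        · exact .inl (hleft hs)
        rcases hM.split b v with hs | ⟨k₂, hk₂⟩
        · exact .inl (hright hs)
        exact .inr ⟨k₁ + k + k₂, by rw [hk₁, hk₂]; push_cast; ring⟩

theorem comp (hM : IsSignalDBM σ M) {f : Node C → Node C} (hf : f tNode = tNode) :
    IsSignalDBM σ fun u v => M (f u) (f v) where
  col u := by simpa only [hf] using hM.col (f u)
  row v := by simpa only [hf] using hM.row (f v)
  split u v := by simpa only [hf] using hM.split (f u) (f v)

end IsSignalDBM

theorem isAdmissibleEdge_upper {σ : Signal X} {c : ClockT C} {d : ℝ}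
    (hd : (∃ k : ℤ, d = k) ∨ (c = none ∧ ∃ j ≤ σ.len, d = σ.pref j)) :
    IsAdmissibleEdge σ (some c) none d := by
  rcases hd with ⟨k, rfl⟩ | ⟨rfl, j, hj, rfl⟩
  · exact .inr (.inr ⟨k, rfl⟩)
  · exact .inl ⟨rfl, 0, j, hj, by simp⟩

theorem isAdmissibleEdge_lower {σ : Signal X} {c : ClockT C} {d : ℝ}
    (hd : (∃ k : ℤ, d = k) ∨ (c = none ∧ ∃ j ≤ σ.len, d = σ.pref j)) :
    IsAdmissibleEdge σ none (some c) (-d) := by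
  rcases hd with ⟨k, rfl⟩ | ⟨rfl, j, hj, rfl⟩
  · exact .inr (.inr ⟨-k, by simp⟩)
  · exact .inr (.inl ⟨rfl, 0, j, hj, by simp⟩)

structure ZoneInv (σ : Signal X) (Z : Set (ClockT C → ℝ)) : Prop where
  isZone : IsZone Z
  nonempty : Z.Nonempty
  boxed : Boxed σ.dur Z
  signalDBM : IsSignalDBM σ (bound Z)

namespace ZoneInv

variable {σ : Signal X} {Z : Set (ClockT C → ℝ)}

theorem isClosedDBM (hI : ZoneInv σ Z) : IsClosedDBM (bound Z) :=
  isClosedDBM_bound hI.nonempty hI.boxed.diffsBddAbove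

theorem inter_constraint (hI : ZoneInv σ Z) {c : ClockT C} {op : CmpOp} {d : ℝ}
    (hd : (∃ k : ℤ, d = k) ∨ (c = none ∧ ∃ j ≤ σ.len, d = σ.pref j))
    (hne : (Z ∩ {ν | op.eval (ν c) d}).Nonempty) : ZoneInv σ (Z ∩ {ν | op.eval (ν c) d}) := by
  refine ⟨hI.isZone.inter_atom c op d, hne, fun ν hν => hI.boxed ν hν.1, ?_⟩
  obtain ⟨ν, hνZ, hνH⟩ := id hne
  have hbdd := hI.boxed.diffsBddAbove
  have hop : (op = .lt ∨ op = .le) ∨ (op = .gt ∨ op = .ge) := by cases op <;> simp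
  rcases hop with hop | hop
  · rw [hI.isZone.bound_inter_upper hbdd hop hne]
    refine hI.signalDBM.tighten hI.isClosedDBM (isAdmissibleEdge_upper hd)
      (zero_le_bound_add hbdd hνZ ?_)
    rcases hop with rfl | rfl <;> simp [CmpOp.eval, diff, extRef] at hνH ⊢ <;> linarith
  · rw [hI.isZone.bound_inter_lower hbdd hop hne]
    refine hI.signalDBM.tighten hI.isClosedDBM (isAdmissibleEdge_lower hd)
      (zero_le_bound_add hbdd hνZ ?_)
    rcases hop with rfl | rfl <;> simp [CmpOp.eval, diff, extRef] at hνH ⊢ <;> linarith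

theorem inter_guard (hI : ZoneInv σ Z) (g : Guard C)
    (hne : (Z ∩ {ν | guardSat (fun c => ν (some c)) g}).Nonempty) :
    ZoneInv σ (Z ∩ {ν | guardSat (fun c => ν (some c)) g}) := by
  induction g generalizing Z with
  | nil => simpa [guardSat] using hI
  | cons p g ih =>
    have hsplit : Z ∩ {ν | guardSat (fun c => ν (some c)) (p :: g)} =
        Z ∩ {ν | p.2.1.eval (ν (some p.1)) p.2.2} ∩ {ν | guardSat (fun c => ν (some c)) g} := by
      ext ν; simp [guardSat, and_assoc]
    rw [hsplit] at hne ⊢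
    exact ih (hI.inter_constraint (.inl ⟨p.2.2, rfl⟩) (hne.mono Set.inter_subset_left)) hne

end ZoneInv

noncomputable def resetNode (ρ : Set C) : Node C → Node C
  | some (some c) => if c ∈ ρ then none else some (some c)
  | x => x

theorem diff_symResetVal (ν : ClockT C → ℝ) (ρ : Set C) (u v : Node C) :
    diff (symResetVal ν ρ) u v = diff ν (resetNode ρ u) (resetNode ρ v) := by
  have h : ∀ x, extRef (symResetVal ν ρ) x = extRef ν (resetNode ρ x) := fun
    | none => rfl
    | some none => rfl
    | some (some c) => by by_cases hc : c ∈ ρ <;> simp [extRef, resetNode, symResetVal, hc]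
  simp only [diff, h]

theorem bound_image_symResetVal (Z : Set (ClockT C → ℝ)) (ρ : Set C) (u v : Node C) :
    bound ((symResetVal · ρ) '' Z) u v = bound Z (resetNode ρ u) (resetNode ρ v) := by
  simp only [bound, Set.image_image, diff_symResetVal]

theorem Boxed.image_symResetVal {d : ℝ} {Z : Set (ClockT C → ℝ)} (hB : Boxed d Z) (ρ : Set C) :
    Boxed d ((symResetVal · ρ) '' Z) := by
  rintro _ ⟨ν, hν, rfl⟩
  obtain ⟨hc, hT⟩ := hB ν hν
  refine ⟨fun c => ?_, hT⟩
  rcases c with _ | c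
  · exact hc none
  · by_cases h : c ∈ ρ <;> simp [symResetVal, h, hc (some c), (hc none).1]

theorem ZoneInv.image_symResetVal {σ : Signal X} {Z : Set (ClockT C → ℝ)} (hI : ZoneInv σ Z)
    (ρ : Set C) (hZ : IsZone ((symResetVal · ρ) '' Z)) : ZoneInv σ ((symResetVal · ρ) '' Z) where
  isZone := hZ
  nonempty := hI.nonempty.image _
  boxed := hI.boxed.image_symResetVal ρ
  signalDBM := by
    rw [show bound ((symResetVal · ρ) '' Z) = fun u v => bound Z (resetNode ρ u) (resetNode ρ v)
      from funext₂ (bound_image_symResetVal Z ρ)]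
    exact hI.signalDBM.comp rfl

/-! ### Time elapse -/

theorem bound_eq_add_of_approx {Z F : Set (ClockT C → ℝ)} {x y x' y' : Node C} {e : ℝ}
    (hF : F.Nonempty) (hbdd : DiffsBddAbove F)
    (hle : ∀ ν' ∈ Z, ∃ ν ∈ F, diff ν' x y ≤ e + diff ν x' y')
    (happrox : ∀ ν ∈ F, ∀ δ > 0, ∃ ν' ∈ Z, e + diff ν x' y' < diff ν' x y + δ) :
    bound Z x y = e + bound F x' y' := by
  obtain ⟨ν₀, hν₀⟩ := id hF
  obtain ⟨ν₀', hν₀', -⟩ := happrox ν₀ hν₀ 1 one_pos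
  refine bound_eq_of_isLUB ⟨ν₀', hν₀'⟩ ⟨?_, fun m hm => ?_⟩
  · rintro _ ⟨ν', hν', rfl⟩
    obtain ⟨ν, hν, h⟩ := hle ν' hν'
    linarith [le_bound hbdd hν x' y']
  · have : bound F x' y' ≤ m - e := bound_le hF fun ν hν => by
      refine le_of_forall_pos_lt_add fun δ hδ => ?_
      obtain ⟨ν', hν', h⟩ := happrox ν hν δ hδ
      linarith [hm ⟨ν', hν', rfl⟩]
    linarith

def elapseInto (Z : Set (ClockT C → ℝ)) (S : Set ℝ) : Set (ClockT C → ℝ) :=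
  upClosure Z ∩ {ν | ν none ∈ S}

section Elapse

variable {Z : Set (ClockT C → ℝ)} {S : Set ℝ} {l u : ℝ}

theorem shift_mem_elapseInto {ν : ClockT C → ℝ} (hν : ν ∈ Z) {s : ℝ} (hs : s ∈ S)
    (hlt : ν none < s) : (fun c => ν c + (s - ν none)) ∈ elapseInto Z S :=
  ⟨⟨ν, hν, s - ν none, by linarith, rfl⟩, by simpa using hs⟩

theorem diff_shift_clocks (ν : ClockT C → ℝ) (τ : ℝ) (c c' : ClockT C) :
    diff (fun x => ν x + τ) (some c) (some c') = diff ν (some c) (some c') := by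
  simp [diff, extRef]

theorem diff_shift_col (ν : ClockT C → ℝ) (τ : ℝ) (c : ClockT C) :
    diff (fun x => ν x + τ) (some c) none = diff ν (some c) tNode + (ν none + τ) := by
  simp [diff, extRef]; ring

theorem diff_shift_row (ν : ClockT C → ℝ) (τ : ℝ) (c : ClockT C) :
    diff (fun x => ν x + τ) none (some c) = diff ν tNode (some c) - (ν none + τ) := by
  simp [diff, extRef]; ring

theorem diff_shift_row' (ν : ClockT C → ℝ) (τ : ℝ) (c : ClockT C) :
    diff (fun x => ν x + τ) none (some c) = diff ν none (some c) - τ := by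
  simp [diff, extRef]; ring

-- Only the part of `Z` with `T < u` reaches `S ⊆ (-∞, u]`; entries against the reference clock
-- `0` move with `T`.
theorem bound_elapseInto_clocks (hSu : ∀ s ∈ S, s ≤ u) (hS : ∀ t < u, ∃ s ∈ S, t < s)
    (c c' : ClockT C) :
    bound (elapseInto Z S) (some c) (some c') =
      bound (Z ∩ {ν | ν none < u}) (some c) (some c') := by
  unfold bound
  congr 1
  ext x
  constructor
  · rintro ⟨_, ⟨⟨ν, hν, τ, hτ, rfl⟩, hs⟩, rfl⟩
    have hs' : ν none + τ ≤ u := hSu _ hs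
    exact ⟨ν, ⟨hν, show ν none < u by linarith⟩, (diff_shift_clocks ν τ c c').symm⟩
  · rintro ⟨ν, ⟨hν, hlt⟩, rfl⟩
    obtain ⟨s, hs, hts⟩ := hS _ hlt
    exact ⟨_, shift_mem_elapseInto hν hs hts, diff_shift_clocks ν _ c c'⟩

theorem bound_elapseInto_col (hSu : ∀ s ∈ S, s ≤ u)
    (hSup : ∀ t < u, ∀ δ > 0, ∃ s ∈ S, t < s ∧ u - δ < s)
    (hF : (Z ∩ {ν | ν none < u}).Nonempty) (hbdd : DiffsBddAbove Z) (c : ClockT C) :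
    bound (elapseInto Z S) (some c) none = u + bound (Z ∩ {ν | ν none < u}) (some c) tNode := by
  refine bound_eq_add_of_approx hF (hbdd.mono Set.inter_subset_left) ?_ fun ν hν δ hδ => ?_
  · rintro _ ⟨⟨ν, hν, τ, hτ, rfl⟩, hs⟩
    have hs' : ν none + τ ≤ u := hSu _ hs
    exact ⟨ν, ⟨hν, show ν none < u by linarith⟩, by rw [diff_shift_col]; linarith⟩
  · obtain ⟨s, hs, hts, hus⟩ := hSup _ hν.2 δ hδ
    exact ⟨_, shift_mem_elapseInto hν.1 hs hts, by rw [diff_shift_col]; linarith⟩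

theorem bound_elapseInto_row_of_le (hSu : ∀ s ∈ S, s ≤ u) (hSl : ∀ s ∈ S, l ≤ s)
    (hSlow : ∀ t < u, t ≤ l → ∀ δ > 0, ∃ s ∈ S, t < s ∧ s < l + δ)
    (hZl : ∀ ν ∈ Z, ν none ≤ l) (hF : (Z ∩ {ν | ν none < u}).Nonempty)
    (hbdd : DiffsBddAbove Z) (c : ClockT C) :
    bound (elapseInto Z S) none (some c) = bound (Z ∩ {ν | ν none < u}) tNode (some c) - l := by
  rw [sub_eq_neg_add]
  refine bound_eq_add_of_approx hF (hbdd.mono Set.inter_subset_left) ?_ fun ν hν δ hδ => ?_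
  · rintro _ ⟨⟨ν, hν, τ, hτ, rfl⟩, hs⟩
    have hs' : ν none + τ ≤ u := hSu _ hs
    have hs'' : l ≤ ν none + τ := hSl _ hs
    exact ⟨ν, ⟨hν, show ν none < u by linarith⟩, by rw [diff_shift_row]; linarith⟩
  · obtain ⟨s, hs, hts, hls⟩ := hSlow _ hν.2 (hZl _ hν.1) δ hδ
    exact ⟨_, shift_mem_elapseInto hν.1 hs hts, by rw [diff_shift_row]; linarith⟩

theorem bound_elapseInto_row_of_mem (hSu : ∀ s ∈ S, s ≤ u)
    (hZS : ∀ ν ∈ Z, ∀ δ > 0, ∃ s ∈ S, ν none < s ∧ s < ν none + δ)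
    (hF : (Z ∩ {ν | ν none < u}).Nonempty) (hbdd : DiffsBddAbove Z) (c : ClockT C) :
    bound (elapseInto Z S) none (some c) = bound (Z ∩ {ν | ν none < u}) none (some c) := by
  rw [← zero_add (bound (Z ∩ _) none _)]
  refine bound_eq_add_of_approx hF (hbdd.mono Set.inter_subset_left) ?_ fun ν hν δ hδ => ?_
  · rintro _ ⟨⟨ν, hν, τ, hτ, rfl⟩, hs⟩
    have hs' : ν none + τ ≤ u := hSu _ hs
    exact ⟨ν, ⟨hν, show ν none < u by linarith⟩, by rw [diff_shift_row']; linarith⟩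
  · obtain ⟨s, hs, hts, hsδ⟩ := hZS _ hν.1 δ hδ
    exact ⟨_, shift_mem_elapseInto hν.1 hs hts, by rw [diff_shift_row']; linarith⟩

end Elapse

/-! ### Stripes and words -/

/-- Stripe `2 i` is the instant `pref i`, stripe `2 i + 1` the open interval that follows it. -/
def stripe (σ : Signal X) (m : ℕ) : Set ℝ :=
  if m % 2 = 0 then {σ.pref (m / 2)} else Set.Ioo (σ.pref (m / 2)) (σ.pref ((m + 1) / 2))

section Stripes

variable {σ : Signal X} {m m' : ℕ}

theorem stripe_of_even (h : m % 2 = 0) : stripe σ m = {σ.pref ((m + 1) / 2)} := by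
  rw [stripe, if_pos h, show (m + 1) / 2 = m / 2 by omega]

theorem stripe_of_odd (h : m % 2 = 1) :
    stripe σ m = Set.Ioo (σ.pref (m / 2)) (σ.pref ((m + 1) / 2)) := by
  rw [stripe, if_neg (by omega)]

theorem stripe_subset_Icc (σ : Signal X) (m : ℕ) :
    stripe σ m ⊆ Set.Icc (σ.pref (m / 2)) (σ.pref ((m + 1) / 2)) := by
  rcases Nat.mod_two_eq_zero_or_one m with h | h
  · rw [stripe_of_even h, show m / 2 = (m + 1) / 2 by omega]
    exact Set.singleton_subset_iff.mpr (Set.left_mem_Icc.mpr le_rfl)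
  · rw [stripe_of_odd h]
    exact Set.Ioo_subset_Icc_self

theorem stripe_two_mul (σ : Signal X) (i : ℕ) : stripe σ (2 * i) = {σ.pref i} := by
  rw [stripe_of_even (by omega), show (2 * i + 1) / 2 = i by omega]

theorem stripe_two_mul_sub_one (σ : Signal X) {i : ℕ} (hi : 1 ≤ i) :
    stripe σ (2 * i - 1) = Set.Ioo (σ.pref (i - 1)) (σ.pref i) := by
  rw [stripe_of_odd (by omega), show (2 * i - 1) / 2 = i - 1 by omega,
    show (2 * i - 1 + 1) / 2 = i by omega]

theorem le_of_mem_stripe_of_lt {t t' : ℝ} (ht : t ∈ stripe σ m) (ht' : t' ∈ stripe σ m')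
    (hlt : t < t') : m ≤ m' := by
  by_contra! h
  have := σ.pref_mono (show (m' + 1) / 2 ≤ m / 2 by omega)
  linarith [(stripe_subset_Icc σ m ht).1, (stripe_subset_Icc σ m' ht').2]

theorem odd_of_mem_stripe_of_lt {t t' : ℝ} (ht : t ∈ stripe σ m) (ht' : t' ∈ stripe σ m)
    (hlt : t < t') : m % 2 = 1 := by
  by_contra h
  rw [stripe_of_even (by omega)] at ht ht'
  exact hlt.ne (ht.trans ht'.symm)

theorem pref_lt_pref_of_odd (h : m % 2 = 1) (hm : m ≤ 2 * σ.len) :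
    σ.pref (m / 2) < σ.pref ((m + 1) / 2) :=
  (σ.pref_lt_pref_iff (by omega)).mpr (by omega)

theorem exists_mem_Ioo_near_right {l u t δ : ℝ} (hlu : l < u) (ht : t < u) (hδ : 0 < δ) :
    ∃ s ∈ Set.Ioo l u, t < s ∧ u - δ < s := by
  have ha : max (max l t) (u - δ) < u := max_lt (max_lt hlu ht) (by linarith)
  have h1 := le_max_left (max l t) (u - δ)
  have h2 := le_max_right (max l t) (u - δ)
  refine ⟨(max (max l t) (u - δ) + u) / 2, ⟨?_, ?_⟩, ?_, ?_⟩ <;>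
    linarith [le_max_left l t, le_max_right l t]

theorem exists_mem_Ioo_near_left {l u δ : ℝ} (hlu : l < u) (hδ : 0 < δ) :
    ∃ s ∈ Set.Ioo l u, s < l + δ := by
  have h1 := min_le_left δ (u - l)
  have h2 := min_le_right δ (u - l)
  have h3 : 0 < min δ (u - l) := lt_min hδ (by linarith)
  exact ⟨l + min δ (u - l) / 2, ⟨by linarith, by linarith⟩, by linarith⟩

theorem stripe_approx_right (hm : m ≤ 2 * σ.len) {t : ℝ} (ht : t < σ.pref ((m + 1) / 2))
    {δ : ℝ} (hδ : 0 < δ) : ∃ s ∈ stripe σ m, t < s ∧ σ.pref ((m + 1) / 2) - δ < s := by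
  rcases Nat.mod_two_eq_zero_or_one m with h | h
  · rw [stripe_of_even h]
    exact ⟨_, rfl, ht, by linarith⟩
  · rw [stripe_of_odd h]
    exact exists_mem_Ioo_near_right (pref_lt_pref_of_odd h hm) ht hδ

theorem stripe_approx_left (hm : m ≤ 2 * σ.len) {t : ℝ} (ht : t < σ.pref ((m + 1) / 2))
    (htl : t ≤ σ.pref (m / 2)) {δ : ℝ} (hδ : 0 < δ) :
    ∃ s ∈ stripe σ m, t < s ∧ s < σ.pref (m / 2) + δ := by
  rcases Nat.mod_two_eq_zero_or_one m with h | h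
  · rw [stripe_of_even h]
    exact ⟨_, rfl, ht, by rw [show (m + 1) / 2 = m / 2 by omega]; linarith⟩
  · rw [stripe_of_odd h]
    obtain ⟨s, hs, hsδ⟩ := exists_mem_Ioo_near_left (pref_lt_pref_of_odd h hm) hδ
    exact ⟨s, hs, htl.trans_lt hs.1, hsδ⟩

theorem stripe_approx_self (h : m % 2 = 1) {t : ℝ} (ht : t ∈ stripe σ m) {δ : ℝ} (hδ : 0 < δ) :
    ∃ s ∈ stripe σ m, t < s ∧ s < t + δ := by
  rw [stripe_of_odd h] at ht ⊢
  obtain ⟨s, hs, hsδ⟩ := exists_mem_Ioo_near_left ht.2 hδ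
  exact ⟨s, ⟨ht.1.trans hs.1, hs.2⟩, hs.1, hsδ⟩

end Stripes

theorem IsSignalDBM.of_elapse {σ : Signal X} {F M : Node C → Node C → ℝ}
    (hF : IsSignalDBM σ F) (hFT : F tNode tNode = 0) (hM0 : M none none = 0)
    {j : ℕ} (hj : j ≤ σ.len)
    (hclocks : ∀ c c' : ClockT C, M (some c) (some c') = F (some c) (some c'))
    (hcol : ∀ c, M (some c) none = σ.pref j + F (some c) tNode)
    (hrow : (∃ j' ≤ σ.len, ∀ c, M none (some c) = F tNode (some c) - σ.pref j') ∨
      ∀ c, M none (some c) = F none (some c)) :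
    IsSignalDBM σ M := by
  have hMT : ∀ c, M (some c) tNode = F (some c) tNode := fun c => hclocks c none
  have hTM : ∀ c, M tNode (some c) = F tNode (some c) := hclocks none
  refine ⟨fun u => ?_, fun v => ?_, fun u v => ?_⟩
  · rcases u with _ | c
    · rcases hrow with ⟨j', hj', h⟩ | h
      · rw [h, hFT]; exact ⟨0, j', hj', by simp⟩
      · rw [h]; exact hF.col none
    · rw [hMT]; exact hF.col _
  · rcases v with _ | c
    · rw [hcol, hFT]; exact ⟨0, j, hj, by simp⟩
    · rw [hTM]; exact hF.row _
  · rcases u with _ | c <;> rcases v with _ | c'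
    · exact .inr ⟨0, by simp [hM0]⟩
    · rcases hrow with ⟨j', hj', h⟩ | h
      · left; rw [h, h none, hTM, hFT]; ring
      · rw [h, h none, hTM]; exact hF.split none (some c')
    · left; rw [hcol, hcol none, hMT, hFT]; ring
    · rw [hclocks, hMT, hTM]; exact hF.split _ _

theorem Boxed.elapseInto {d : ℝ} {Z : Set (ClockT C → ℝ)} (hB : Boxed d Z) {S : Set ℝ}
    (hd : ∀ ν ∈ elapseInto Z S, ν none ≤ d) : Boxed d (elapseInto Z S) := by
  rintro _ hν'
  refine ⟨fun c => ?_, hd _ hν'⟩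
  obtain ⟨⟨ν, hν, τ, hτ, rfl⟩, -⟩ := hν'
  obtain ⟨h0, h1⟩ := (hB ν hν).1 c
  exact ⟨by linarith, by linarith⟩

theorem ZoneInv.elapseInto_stripe {σ : Signal X} {Z : Set (ClockT C → ℝ)} (hI : ZoneInv σ Z)
    {m : ℕ} (hm : m ≤ 2 * σ.len) (hZ' : IsZone (elapseInto Z (stripe σ m)))
    (hne' : (elapseInto Z (stripe σ m)).Nonempty)
    (hdur : ∀ ν ∈ elapseInto Z (stripe σ m), ν none ≤ σ.dur)
    (hZ : (∀ ν ∈ Z, ν none ≤ σ.pref (m / 2)) ∨ (m % 2 = 1 ∧ ∀ ν ∈ Z, ν none ∈ stripe σ m)) :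
    ZoneInv σ (elapseInto Z (stripe σ m)) := by
  set u := σ.pref ((m + 1) / 2)
  have hSu : ∀ s ∈ stripe σ m, s ≤ u := fun s hs => (stripe_subset_Icc σ m hs).2
  have hbdd := hI.boxed.diffsBddAbove
  have hFne : (Z ∩ {ν | ν none < u}).Nonempty := by
    obtain ⟨_, ⟨ν, hν, τ, hτ, rfl⟩, hs⟩ := hne'
    have : ν none + τ ≤ u := hSu _ hs
    exact ⟨ν, hν, show ν none < u by linarith⟩
  have hF : ZoneInv σ (Z ∩ {ν | ν none < u}) :=
    hI.inter_constraint (op := .lt) (.inr ⟨rfl, _, by omega, rfl⟩) hFne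
  have hB' := hI.boxed.elapseInto hdur
  refine ⟨hZ', hne', hB', hF.signalDBM.of_elapse (hF.isClosedDBM.diag _)
    ((isClosedDBM_bound hne' hB'.diffsBddAbove).diag _) (j := (m + 1) / 2) (by omega)
    (bound_elapseInto_clocks hSu fun t ht => ?_)
    (bound_elapseInto_col hSu (fun t ht δ hδ => stripe_approx_right hm ht hδ) hFne hbdd) ?_⟩
  · obtain ⟨s, hs, hts, -⟩ := stripe_approx_right hm ht one_pos
    exact ⟨s, hs, hts⟩
  rcases hZ with hZl | ⟨hodd, hZS⟩
  · refine .inl ⟨m / 2, by omega, bound_elapseInto_row_of_le hSu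
      (fun s hs => (stripe_subset_Icc σ m hs).1) (fun t ht htl δ hδ => ?_) hZl hFne hbdd⟩
    exact stripe_approx_left hm ht htl hδ
  · exact .inr (bound_elapseInto_row_of_mem hSu
      (fun ν hν δ hδ => stripe_approx_self hodd (hZS ν hν) hδ) hFne hbdd)

def Signal.valueSet (σ : Signal X) : Set (X → ℝ) := σ.val '' Set.Iio σ.len

theorem Signal.mem_valueSet_of_mem_valuesOn (σ : Signal X) {t t' : ℝ} {a : X → ℝ}
    (ha : a ∈ σ.valuesOn t t') : a ∈ σ.valueSet := by
  obtain ⟨j, hj, rfl⟩ := List.mem_map.mp ((List.destutter_sublist _ _).subset ha)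
  exact ⟨j, List.mem_range.mp (List.mem_filter.mp hj).1, rfl⟩

theorem length_absCat_le {V : Type} (u v : List V) :
    (absCat u v).length ≤ u.length + v.length :=
  (List.destutter_sublist _ _).length_le.trans_eq List.length_append

theorem mem_of_mem_absCat {V : Type} {u v : List V} {a : V} (ha : a ∈ absCat u v) :
    a ∈ u ∨ a ∈ v :=
  List.mem_append.mp ((List.destutter_sublist _ _).subset ha)

section Values

variable {σ : Signal X} {m m' : ℕ} {t t' : ℝ}

theorem length_valuesOn_le (hm' : m' ≤ 2 * σ.len) (ht : t ∈ stripe σ m)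
    (ht' : t' ∈ stripe σ m') : (σ.valuesOn t t').length ≤ (m' + 1) / 2 - m / 2 := by
  set idx := (List.range σ.len).filter fun x => decide (σ.pref x < t' ∧ t < σ.pref (x + 1))
  have hsub : idx.toFinset ⊆ Finset.Ico (m / 2) ((m' + 1) / 2) := by
    intro x hx
    simp only [idx, List.mem_toFinset, List.mem_filter, List.mem_range, decide_eq_true_eq] at hx
    obtain ⟨hx, hx1, hx2⟩ := hx
    have h1 := (stripe_subset_Icc σ m ht).1
    have h2 := (stripe_subset_Icc σ m' ht').2
    have := (σ.pref_lt_pref_iff (i := m / 2) (j := x + 1) (by omega)).mp (by linarith)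
    have := (σ.pref_lt_pref_iff (i := x) (j := (m' + 1) / 2) (by omega)).mp (by linarith)
    rw [Finset.mem_Ico]
    omega
  calc (σ.valuesOn t t').length ≤ (idx.map σ.val).length := (List.destutter_sublist _ _).length_le
    _ = idx.toFinset.card := by
      rw [List.length_map, List.toFinset_card_of_nodup (List.nodup_range.filter _)]
    _ ≤ (m' + 1) / 2 - m / 2 := (Finset.card_le_card hsub).trans_eq (Nat.card_Ico _ _)

theorem valuesOn_of_mem_stripe (hodd : m % 2 = 1) (hm : m ≤ 2 * σ.len) (ht : t ∈ stripe σ m)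
    (ht' : t' ∈ stripe σ m) : σ.valuesOn t t' = [σ.val (m / 2)] := by
  rw [stripe_of_odd hodd, show (m + 1) / 2 = m / 2 + 1 by omega] at ht ht'
  have hidx : (List.range σ.len).filter (fun x => decide (σ.pref x < t' ∧ t < σ.pref (x + 1))) =
      [m / 2] := by
    rw [List.filter_congr (q := fun x => decide (x = m / 2)) fun x hx => ?_, List.filter_eq,
      List.count_range, if_pos (by omega), List.replicate_one]
    have hx := List.mem_range.mp hx
    simp only [decide_eq_decide]
    constructor
    · rintro ⟨h1, h2⟩
      have := (σ.pref_lt_pref_iff (by omega)).mp (h1.trans ht'.2)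
      have := (σ.pref_lt_pref_iff (by omega)).mp (ht.1.trans h2)
      omega
    · rintro rfl
      exact ⟨ht'.1, ht.2⟩
  rw [Signal.valuesOn, hidx, List.map_singleton, List.destutter_singleton]

theorem valAt_of_mem_stripe (hodd : m % 2 = 1) (hm : m ≤ 2 * σ.len) (ht : t ∈ stripe σ m) :
    σ.valAt t = σ.val (m / 2) := by
  rw [stripe_of_odd hodd, show (m + 1) / 2 = m / 2 + 1 by omega] at ht
  rw [Signal.valAt, (List.findIdx_eq (i := m / 2) (by simp; omega)).mpr]
  simp only [List.getElem_range, decide_eq_true_eq, decide_eq_false_iff_not, not_lt]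
  exact ⟨ht.2, fun j hj => (σ.pref_mono (by omega)).trans ht.1.le⟩

-- Within one open stripe the new value is absorbed; a later stripe appends at most the values
-- of the stripes in between.
theorem length_absCat_valuesOn_le {w : List (X → ℝ)} (hw : w.length ≤ m + 1)
    (hwt : w = [] ∨ absCat w [σ.valAt t] = w) (hm' : m' ≤ 2 * σ.len) (hmm : m ≤ m')
    (hsame : m = m' → m % 2 = 1) (ht : t ∈ stripe σ m) (ht' : t' ∈ stripe σ m') :
    (absCat w (σ.valuesOn t t')).length ≤ m' + 1 := by
  rcases hmm.lt_or_eq with hlt | rfl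
  · have := length_absCat_le w (σ.valuesOn t t')
    have := length_valuesOn_le hm' ht ht'
    omega
  · have hodd := hsame rfl
    rw [valuesOn_of_mem_stripe hodd hm' ht ht']
    rcases hwt with rfl | hwt
    · simp [absCat]
    · rwa [← valAt_of_mem_stripe hodd hm' ht, hwt]

end Values

/-! ### Reachable states -/

def ReachInv {L : Type} (σ : Signal X) (q : SymState X L C) : Prop :=
  ZoneInv σ q.2.1 ∧ ∃ m ≤ 2 * σ.len, (∀ ν ∈ q.2.1, ν none ∈ stripe σ m) ∧
    q.2.2.length ≤ m + 1 ∧ ∀ a ∈ q.2.2, a ∈ σ.valueSet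

section Reach

variable {L : Type} {σ : Signal X} {A : TSA X L C} {q q' : SymState X L C}

theorem isZone_singleton_zeroValT [Finite C] : IsZone ({zeroValT} : Set (ClockT C → ℝ)) := by
  have := Fintype.ofFinite C
  refine isZone_iff.mpr ⟨(Finset.univ : Finset (ClockT C)).toList.flatMap
    fun c => [.inl (c, .le, 0), .inl (c, .ge, 0)], ?_⟩
  ext ν
  constructor
  · rintro rfl a ha
    obtain ⟨c, -, hc⟩ := List.mem_flatMap.mp ha
    simp only [List.mem_cons, List.not_mem_nil, or_false] at hc
    rcases hc with rfl | rfl <;> simp [ZoneAtom.Holds, CmpOp.eval, zeroValT]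
  · intro h
    funext c
    have h₁ := h (.inl (c, .le, 0)) (List.mem_flatMap.mpr ⟨c, by simp, by simp⟩)
    have h₂ := h (.inl (c, .ge, 0)) (List.mem_flatMap.mpr ⟨c, by simp, by simp⟩)
    exact le_antisymm h₁ h₂

theorem reachInv_of_mem_symQ0 [Finite C] (hq : q ∈ symQ0 A) : ReachInv σ q := by
  obtain ⟨-, hZ, hw⟩ := hq
  have hb : bound q.2.1 = fun _ _ => 0 := by
    funext u v
    rw [hZ, bound, Set.image_singleton, csSup_singleton]
    cases u <;> cases v <;> simp [diff, extRef, zeroValT]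
  refine ⟨⟨hZ ▸ isZone_singleton_zeroValT, hZ ▸ Set.singleton_nonempty _, ?_, ?_⟩, 0, by omega,
    ?_, by simp [hw], by simp [hw]⟩
  · rw [hZ]
    rintro ν rfl
    exact ⟨fun _ => ⟨le_rfl, le_rfl⟩, σ.dur_nonneg⟩
  · rw [hb]
    exact ⟨fun _ => ⟨0, 0, by omega, by simp [σ.pref_zero]⟩,
      fun _ => ⟨0, 0, by omega, by simp [σ.pref_zero]⟩, fun _ _ => .inl (by simp)⟩
  · rw [hZ]
    rintro ν rfl
    simp [stripe, zeroValT, σ.pref_zero]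

theorem ReachInv.of_discrete (hI : ReachInv σ q) (hq' : q' ∈ symQ σ) {g : Guard C} {ρ : Set C}
    (hZ' : q'.2.1 = {ν' | ∃ ν ∈ q.2.1, guardSat (fun c => ν (some c)) g ∧ ν' = symResetVal ν ρ})
    (hw' : q'.2.2 = []) : ReachInv σ q' := by
  obtain ⟨hZ, m, hm, hstripe, -, -⟩ := hI
  obtain ⟨hz', hne', -⟩ := hq'
  have hZ'eq : q'.2.1 = (symResetVal · ρ) '' (q.2.1 ∩ {ν | guardSat (fun c => ν (some c)) g}) := by
    rw [hZ']
    ext ν'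
    simp [eq_comm, and_assoc]
  rw [hZ'eq] at hz' hne'
  refine ⟨hZ'eq ▸ (hZ.inter_guard g hne'.of_image).image_symResetVal ρ hz', m, hm,
    fun ν' hν' => ?_, by simp [hw'], by simp [hw']⟩
  rw [hZ'eq] at hν'
  obtain ⟨ν, hν, rfl⟩ := hν'
  exact hstripe ν hν.1

theorem ReachInv.of_elapse (hI : ReachInv σ q) (hq : q ∈ symQ σ) (hq' : q' ∈ symQ σ) {m' : ℕ}
    (hm' : m' ≤ 2 * σ.len) (hZ' : q'.2.1 = elapseInto q.2.1 (stripe σ m'))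
    (hw' : ∃ ν ∈ q.2.1, ∃ ν' ∈ q'.2.1, q'.2.2 = absCat q.2.2 (σ.valuesOn (ν none) (ν' none))) :
    ReachInv σ q' := by
  obtain ⟨hZ, m, hm, hstripe, hlen, hvals⟩ := hI
  obtain ⟨hz', hne', hdur, -, -⟩ := hq'
  rw [hZ'] at hz' hne' hdur
  have hmm : m ≤ m' ∧ (m = m' → m % 2 = 1) := by
    obtain ⟨_, ⟨ν, hν, τ, hτ, rfl⟩, hs⟩ := hne'
    have hlt : ν none < ν none + τ := by linarith
    exact ⟨le_of_mem_stripe_of_lt (hstripe ν hν) hs hlt,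
      fun h => odd_of_mem_stripe_of_lt (hstripe ν hν) (h ▸ hs) hlt⟩
  obtain ⟨ν, hν, ν', hν', hw⟩ := hw'
  have hν'S : ν' none ∈ stripe σ m' := by rw [hZ'] at hν'; exact hν'.2
  refine ⟨hZ' ▸ hZ.elapseInto_stripe hm' hz' hne' hdur ?_, m', hm', ?_, ?_, ?_⟩
  · rcases hmm.1.lt_or_eq with hlt | rfl
    · exact .inl fun ν hν => (stripe_subset_Icc σ m (hstripe ν hν)).2.trans (σ.pref_mono (by omega))
    · exact .inr ⟨hmm.2 rfl, hstripe⟩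
  · rw [hZ']
    exact fun ν hν => hν.2
  · obtain ⟨-, -, -, -, hwt⟩ := hq
    rw [hw]
    exact length_absCat_valuesOn_le hlen (hwt.imp_right fun h => h ν hν) hm' hmm.1 hmm.2
      (hstripe ν hν) hν'S
  · intro a ha
    rw [hw] at ha
    exact (mem_of_mem_absCat ha).elim (hvals a) σ.mem_valueSet_of_mem_valuesOn

theorem ReachInv.step (hI : ReachInv σ q) (hs : symStep σ A q q') : ReachInv σ q' := by
  obtain ⟨hq, hq', ⟨g, ρ, -, hZ', -, hw'⟩ | ⟨-, hw', i, hi1, hi, hZ' | hZ'⟩⟩ := hs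
  · exact hI.of_discrete hq' hZ' hw'
  · exact hI.of_elapse hq hq' (m' := 2 * i) (by omega)
      (by rw [hZ', elapseInto, stripe_two_mul]; rfl) hw'
  · exact hI.of_elapse hq hq' (m' := 2 * i - 1) (by omega)
      (by rw [hZ', elapseInto, stripe_two_mul_sub_one σ hi1]; rfl) hw'

theorem reachInv_of_mem_reach [Finite C] (hq : q ∈ reach (symStep σ A) (symQ0 A)) :
    ReachInv σ q := by
  obtain ⟨q₀, hq₀, hrt⟩ := hq
  induction hrt with
  | refl => exact reachInv_of_mem_symQ0 hq₀
  | tail _ hs ih => exact ih.step hs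

end Reach

theorem finite_setOf_abs_le_add_int {A : Set ℝ} (hA : A.Finite) (d : ℝ) :
    {x | |x| ≤ d ∧ ∃ a ∈ A, ∃ k : ℤ, x = a + k}.Finite := by
  refine (hA.biUnion fun a _ =>
    (Set.finite_Icc ⌈-d - a⌉ ⌊d - a⌋).image fun k : ℤ => a + k).subset ?_
  rintro x ⟨hx, a, ha, k, rfl⟩
  rw [abs_le] at hx
  exact Set.mem_biUnion ha ⟨k, ⟨Int.ceil_le.mpr (by linarith), Int.le_floor.mpr (by linarith)⟩, rfl⟩

theorem finite_setOf_length_le {V : Type} {A : Set V} (hA : A.Finite) (n : ℕ) :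
    {w : List V | w.length ≤ n ∧ ∀ a ∈ w, a ∈ A}.Finite := by
  have := hA.to_subtype
  refine ((List.finite_length_le A n).image (List.map Subtype.val)).subset ?_
  rintro w ⟨hw, hwA⟩
  lift w to List A using hwA
  exact ⟨w, by simpa using hw, rfl⟩

def Signal.prefDiffs (σ : Signal X) : Set ℝ :=
  (fun p : ℕ × ℕ => σ.pref p.1 - σ.pref p.2) '' (Set.Iic σ.len ×ˢ Set.Iic σ.len)

theorem IsSignalDBM.mem_prefDiffs_add_int {σ : Signal X} {M : Node C → Node C → ℝ}
    (hM : IsSignalDBM σ M) (u v : Node C) : ∃ a ∈ σ.prefDiffs, ∃ k : ℤ, M u v = a + k := by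
  rcases hM.split u v with h | ⟨k, h⟩
  · obtain ⟨k₁, j₁, hj₁, h₁⟩ := hM.col u
    obtain ⟨k₂, j₂, hj₂, h₂⟩ := hM.row v
    exact ⟨_, ⟨(j₂, j₁), ⟨hj₂, hj₁⟩, rfl⟩, k₁ + k₂, by rw [h, h₁, h₂]; push_cast; ring⟩
  · exact ⟨_, ⟨(0, 0), ⟨Nat.zero_le _, Nat.zero_le _⟩, rfl⟩, k, by rw [h]; simp⟩

theorem statement6_general {X L C S : Type} [Finite L] [Finite C]
    [CSemiring S] [CompleteCSemiring S]
    (W : TSWA X L C S) (σ : Signal X) :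
    (reach (symStep σ W.toTSA) (symQ0 W.toTSA)).Finite := by
  set D := {x | |x| ≤ σ.dur ∧ ∃ a ∈ σ.prefDiffs, ∃ k : ℤ, x = a + k}
  have hD : D.Finite := finite_setOf_abs_le_add_int
    (((Set.finite_Iic _).prod (Set.finite_Iic _)).image _) _
  have hM : (Set.univ.pi fun _ : Node C => Set.univ.pi fun _ : Node C => D).Finite :=
    Set.Finite.pi fun _ => Set.Finite.pi fun _ => hD
  have hw := finite_setOf_length_le ((Set.finite_Iio σ.len).image σ.val) (2 * σ.len + 1)
  refine ((Set.finite_univ.prod (hM.prod (Set.finite_univ.prod hw))).image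
    fun p : L × (Node C → Node C → ℝ) × (Node C → Node C → Prop) × List (X → ℝ) =>
      (p.1, dbmSet p.2.1 p.2.2.1, p.2.2.2)).subset ?_
  intro q hq
  obtain ⟨hZ, m, hm, -, hlen, hvals⟩ := reachInv_of_mem_reach hq
  refine ⟨(q.1, bound q.2.1, BoundAttained q.2.1, q.2.2),
    ⟨trivial, ?_, trivial, show q.2.2.length ≤ _ by omega, hvals⟩, ?_⟩
  · simp only [Set.mem_pi, Set.mem_univ, true_implies]
    exact fun u v => ⟨hZ.boxed.abs_bound_le hZ.nonempty u v, hZ.signalDBM.mem_prefDiffs_add_int u v⟩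
  · change (q.1, dbmSet (bound q.2.1) (BoundAttained q.2.1), q.2.2) = q
    rw [← hZ.isZone.eq_dbmSet hZ.nonempty hZ.boxed.diffsBddAbove]

/-- For any WSTTS `S^sym` of a signal `σ` and a TSWA `W`, the set of
symbolic states reachable from the initial symbolic states is finite. -/
theorem statement6 {X L C S : Type} [Finite X] [Finite L] [Finite C]
    [CSemiring S] [CompleteCSemiring S]
    (W : TSWA X L C S) (σ : Signal X) :
    (reach (symStep σ W.toTSA) (symQ0 W.toTSA)).Finite :=
  statement6_general W σ

end QTPM
end

section
/- Let σ be a signal with aᵢ≠a_{i+1} for all i, W a TSWA over ℝ and a complete semiring 𝕊, S the WTTS and S^sym the WSTTS of σ and W. If 𝕊 is idempotent, then α^sym(S^sym) ⪯ α(S), where ⪯ is the canonical order of 𝕊 (s ⪯ s' iff s⊕s' = s'). -/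
attribute [local instance] Classical.propDecidable

/-!
Every accepting symbolic run is represented by an accepting concrete run of the same length and
the same weight. Going backwards along the symbolic run, every valuation of a target zone has a
predecessor in the source zone, and the values read during a time elapse do not depend on the
chosen valuations, because within a reachable zone the absolute time never crosses a switching
point of `σ`. Runs of a fixed length of the finitely branching WSTTS from its finitely many
initial states are finitely many, so choosing a representative for each symbolic run is a
finite-to-one map; in an idempotent complete semiring the sum over the symbolic runs is then
absorbed by the sum over the concrete runs.
-/

namespace QTPM

section CompleteSemiring

open CSemiring CompleteCSemiring

variable {S : Type} [CSemiring S]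

theorem CSemiring.zero_add (a : S) : add zero a = a := by
  rw [CSemiring.add_comm]
  exact CSemiring.add_zero a

variable [CompleteCSemiring S]

theorem iSum_subtype_unit_const {q : Unit → Prop} (hq : q ()) (s : S) :
    iSum (fun _ : {u // q u} => s) = s := by
  obtain rfl : q = (· = ()) := funext fun _ => propext ⟨fun _ => rfl, fun _ => hq⟩
  -- `iSum_single` only knows `Unit`; partitioning `Unit` along `id` yields `{u // u = ()}`.
  have h := iSum_partition (fun u : Unit => u) (fun _ => s)
  rw [iSum_single, iSum_single] at h
  exact h.symm

theorem iSum_eq_of_subsingleton {T : Type} [Subsingleton T] (t : T) (f : T → S) :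
    iSum f = f t := by
  have h := iSum_partition (fun _ : Unit => t) (fun _ => f t)
  rw [iSum_single] at h
  rw [h]
  congr 1
  funext k
  rw [iSum_subtype_unit_const (Subsingleton.elim t k), Subsingleton.elim t k]

theorem iSum_comp_equiv {ι κ : Type} (e : ι ≃ κ) (f : κ → S) : iSum (f ∘ e) = iSum f := by
  rw [iSum_partition e]
  congr 1
  funext k
  have : Subsingleton {i // e i = k} :=
    ⟨fun x y => Subtype.ext (e.injective (x.2.trans y.2.symm))⟩
  rw [iSum_eq_of_subsingleton ⟨e.symm k, e.apply_symm_apply k⟩]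
  simp

theorem iSum_of_isEmpty {T : Type} [IsEmpty T] (f : T → S) : iSum f = zero := by
  rw [iSum_partition (isEmptyElim : T → Empty), ← iSum_empty (fun _ => zero)]
  congr 1
  funext k
  exact k.elim

theorem iSum_sum {ι κ : Type} (f : ι ⊕ κ → S) :
    iSum f = add (iSum (f ∘ Sum.inl)) (iSum (f ∘ Sum.inr)) := by
  let eₗ : {x : ι ⊕ κ // x.isLeft = true} ≃ ι := Equiv.sumIsLeft
  let eᵣ : {x : ι ⊕ κ // x.isLeft = false} ≃ κ :=
    (Equiv.subtypeEquivRight fun x => by simp).trans Equiv.sumIsRight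
  rw [iSum_partition Sum.isLeft, iSum_pair, ← iSum_comp_equiv eₗ, ← iSum_comp_equiv eᵣ]
  congr 2 <;> funext ⟨x, hx⟩ <;> cases x <;> first | rfl | simp at hx

theorem iSum_const_of_finite (hidem : Idem S) {T : Type} [Finite T] [Nonempty T] (s : S) :
    iSum (fun _ : T => s) = s := by
  refine Finite.induction_empty_option (P := fun T => Nonempty T → iSum (fun _ : T => s) = s)
    ?_ ?_ ?_ T ‹_›
  · intro α β e ih _
    rw [← iSum_comp_equiv e]
    exact ih (e.nonempty_congr.mpr ‹_›)
  · rintro ⟨⟨⟩⟩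
  · intro α _ ih _
    rw [← iSum_comp_equiv (Equiv.optionEquivSumPUnit α).symm, iSum_sum]
    simp only [Function.comp_def]
    rcases isEmpty_or_nonempty α with hα | hα
    · rw [iSum_of_isEmpty, iSum_single, CSemiring.zero_add]
    · rw [ih hα, iSum_single, hidem]

theorem csLe_iSum_of_finiteToOne (hidem : Idem S) {α β : Type} (F : α → β)
    (hF : ∀ b, (F ⁻¹' {b}).Finite) {f : α → S} {g : β → S} (hfg : ∀ a, f a = g (F a)) :
    csLe (iSum f) (iSum g) := by
  -- Partition `α ⊕ β` along `F` and `id`: each fibre is finite, nonempty and constantly `g b`.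
  have hfiber (b : β) :
      iSum (fun x : {x // Sum.elim F id x = b} => Sum.elim f g x.1) = g b := by
    have : Finite {x // Sum.elim F id x = b} := by
      refine Set.Finite.to_subtype (((hF b).image Sum.inl).union (Set.finite_singleton
        (Sum.inr b)) |>.subset ?_)
      rintro (a | b') rfl
      · exact Or.inl ⟨a, rfl, rfl⟩
      · exact Or.inr rfl
    have : Nonempty {x // Sum.elim F id x = b} := ⟨⟨Sum.inr b, rfl⟩⟩
    rw [← iSum_const_of_finite hidem (T := {x // Sum.elim F id x = b}) (g b)]
    congr 1
    funext ⟨x, hx⟩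
    subst hx
    cases x <;> simp [hfg]
  calc add (iSum f) (iSum g) = iSum (Sum.elim f g) := by
        rw [iSum_sum, Sum.elim_comp_inl, Sum.elim_comp_inr]
    _ = iSum g := by rw [iSum_partition (Sum.elim F id)]; exact congrArg iSum (funext hfiber)

end CompleteSemiring

section Realization

variable {X L C : Type}

theorem Signal.pref_mono_s15 (σ : Signal X) : Monotone σ.pref := fun _ _ h =>
  ((List.take_sublist_take_left h).map Prod.snd).sum_le_sum fun _ hx => by
    obtain ⟨e, he, rfl⟩ := List.mem_map.mp hx
    exact (σ.pos e (List.mem_of_mem_take he)).le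

theorem Signal.lt_pref_iff_and_pref_lt_iff (σ : Signal X) {j : ℕ} {t t' : ℝ}
    (ht : σ.pref j < t ∧ t < σ.pref (j + 1)) (ht' : σ.pref j < t' ∧ t' < σ.pref (j + 1))
    (m : ℕ) : (t < σ.pref m ↔ t' < σ.pref m) ∧ (σ.pref m < t ↔ σ.pref m < t') := by
  rcases le_or_gt m j with hm | hm
  · have := σ.pref_mono_s15 hm
    constructor <;> constructor <;> intro <;> linarith [ht.1, ht'.1]
  · have := σ.pref_mono_s15 (Nat.succ_le_of_lt hm)
    constructor <;> constructor <;> intro <;> linarith [ht.2, ht'.2]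

def Signal.InOneCell (σ : Signal X) (Z : Set (ClockT C → ℝ)) : Prop :=
  (∃ r, ∀ ν ∈ Z, ν none = r) ∨ ∃ j, ∀ ν ∈ Z, σ.pref j < ν none ∧ ν none < σ.pref (j + 1)

theorem Signal.InOneCell.of_forall_exists {σ : Signal X} {Z Z' : Set (ClockT C → ℝ)}
    (hZ : σ.InOneCell Z) (hZ' : ∀ ν' ∈ Z', ∃ ν ∈ Z, ν' none = ν none) : σ.InOneCell Z' := by
  rcases hZ with ⟨r, hr⟩ | ⟨j, hj⟩
  · refine Or.inl ⟨r, fun ν' hν' => ?_⟩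
    obtain ⟨ν, hν, he⟩ := hZ' ν' hν'
    rw [he, hr ν hν]
  · refine Or.inr ⟨j, fun ν' hν' => ?_⟩
    obtain ⟨ν, hν, he⟩ := hZ' ν' hν'
    exact he ▸ hj ν hν

theorem Signal.valuesOn_eq_of_inOneCell (σ : Signal X) {Z Z' : Set (ClockT C → ℝ)}
    (hZ : σ.InOneCell Z) (hZ' : σ.InOneCell Z') {μ ν μ' ν' : ClockT C → ℝ}
    (hμ : μ ∈ Z) (hν : ν ∈ Z) (hμ' : μ' ∈ Z') (hν' : ν' ∈ Z') :
    σ.valuesOn (μ none) (μ' none) = σ.valuesOn (ν none) (ν' none) := by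
  have hstart : ∀ m, μ none < σ.pref m ↔ ν none < σ.pref m := by
    rcases hZ with ⟨r, hr⟩ | ⟨j, hj⟩
    · simp [hr μ hμ, hr ν hν]
    · exact fun m => (σ.lt_pref_iff_and_pref_lt_iff (hj μ hμ) (hj ν hν) m).1
  have hend : ∀ m, σ.pref m < μ' none ↔ σ.pref m < ν' none := by
    rcases hZ' with ⟨r, hr⟩ | ⟨j, hj⟩
    · simp [hr μ' hμ', hr ν' hν']
    · exact fun m => (σ.lt_pref_iff_and_pref_lt_iff (hj μ' hμ') (hj ν' hν') m).2
  simp only [Signal.valuesOn, hstart, hend]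

/-- Invariant of symbolic runs. The second conjunct makes the values read by a time elapse
independent of the valuations chosen in the zones. -/
def Admissible (σ : Signal X) (q : SymState X L C) : Prop :=
  (∀ ν ∈ q.2.1, ∀ c, 0 ≤ ν c) ∧ σ.InOneCell q.2.1

theorem admissible_of_mem_symQ0 (σ : Signal X) {A : TSA X L C} {q : SymState X L C}
    (hq : q ∈ symQ0 A) : Admissible σ q := by
  obtain ⟨-, hZ, -⟩ := hq
  rw [Admissible, hZ]
  exact ⟨by rintro _ rfl _; exact le_rfl, Or.inl ⟨0, by rintro _ rfl; rfl⟩⟩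

theorem admissible_of_symStep {σ : Signal X} {A : TSA X L C} {q q' : SymState X L C}
    (h : symStep σ A q q') (hq : Admissible σ q) : Admissible σ q' := by
  obtain ⟨-, -, ⟨g, ρ, -, hZ', -⟩ | ⟨-, -, i, hi, -, hZ'⟩⟩ := h
  · have hreset : ∀ ν' ∈ q'.2.1, ∃ ν ∈ q.2.1, ν' = symResetVal ν ρ := by
      rw [hZ']
      rintro _ ⟨ν, hν, -, rfl⟩
      exact ⟨ν, hν, rfl⟩
    refine ⟨fun ν' hν' c => ?_, hq.2.of_forall_exists fun ν' hν' => ?_⟩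
    · obtain ⟨ν, hν, rfl⟩ := hreset ν' hν'
      cases c with
      | none => exact hq.1 ν hν none
      | some c =>
        show 0 ≤ if c ∈ ρ then 0 else ν (some c)
        split_ifs
        exacts [le_rfl, hq.1 ν hν _]
    · obtain ⟨ν, hν, rfl⟩ := hreset ν' hν'
      exact ⟨ν, hν, rfl⟩
  · have hup : q'.2.1 ⊆ upClosure q.2.1 := by
      rcases hZ' with h | h <;> exact h ▸ Set.inter_subset_left
    refine ⟨fun ν' hν' c => ?_, ?_⟩
    · obtain ⟨ν, hν, τ, hτ, rfl⟩ := hup hν'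
      linarith [hq.1 ν hν c]
    · rcases hZ' with h | h
      · exact Or.inl ⟨σ.pref i, fun ν' hν' => (h ▸ hν').2⟩
      · refine Or.inr ⟨i - 1, fun ν' hν' => ?_⟩
        rw [Nat.sub_add_cancel hi]
        exact (h ▸ hν').2

theorem admissible_of_mem_pathsBetween {σ : Signal X} {A : TSA X L C}
    {B : Set (SymState X L C)} {π : List (SymState X L C)}
    (hπ : π ∈ PathsBetween (symStep σ A) (symQ0 A) B) : ∀ q ∈ π, Admissible σ q := by
  obtain ⟨hchain, ⟨q₀, hq₀, hhead⟩, -⟩ := hπ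
  obtain ⟨π, rfl⟩ := List.head?_eq_some_iff.mp hhead
  exact List.IsChain.induction _ _ hchain (fun _ _ => admissible_of_symStep)
    fun _ => admissible_of_mem_symQ0 σ hq₀

def toWState (q : SymState X L C) (ν : ClockT C → ℝ) : WState X L C :=
  (q.1, restrC ν, ν none, q.2.2)

def Represents (q : SymState X L C) (p : WState X L C) : Prop :=
  ∃ ν ∈ q.2.1, p = toWState q ν

theorem toWState_mem_wttsQ {σ : Signal X} {q : SymState X L C} {ν : ClockT C → ℝ}
    (hq : q ∈ symQ σ) (hν : ν ∈ q.2.1) (hpos : ∀ c, 0 ≤ ν c) :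
    toWState q ν ∈ wttsQ (L := L) (C := C) σ :=
  ⟨fun c => hpos (some c), hpos none, hq.2.2.1 ν hν, hq.2.2.2.1⟩

theorem exists_wttsStep_of_symStep {σ : Signal X} {A : TSA X L C} {q q' : SymState X L C}
    (h : symStep σ A q q') (hq : Admissible σ q) (hq' : Admissible σ q')
    {ν' : ClockT C → ℝ} (hν' : ν' ∈ q'.2.1) :
    ∃ ν ∈ q.2.1, wttsStep σ A (toWState q ν) (toWState q' ν') := by
  obtain ⟨hqQ, hqQ', ⟨g, ρ, hΔ, hZ', hne, hnil⟩ |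
    ⟨hl, ⟨μ, hμ, μ', hμ', hvals⟩, i, -, -, hZ'⟩⟩ := h
  · obtain ⟨ν, hν, hg, rfl⟩ := hZ' ▸ hν'
    refine ⟨ν, hν, toWState_mem_wttsQ hqQ hν (hq.1 ν hν),
      toWState_mem_wttsQ hqQ' hν' (hq'.1 _ hν'), Or.inl ⟨g, ρ, hΔ, hg, ?_, rfl, hne, hnil⟩⟩
    funext c
    rfl
  · have hup : ν' ∈ upClosure q.2.1 := by
      rcases hZ' with h | h <;> exact (h ▸ hν').1
    obtain ⟨ν, hν, τ, hτ, rfl⟩ := hup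
    refine ⟨ν, hν, toWState_mem_wttsQ hqQ hν (hq.1 ν hν),
      toWState_mem_wttsQ hqQ' hν' (hq'.1 _ hν'), Or.inr ⟨hl, τ, hτ, rfl, rfl, ?_⟩⟩
    show q'.2.2 = absCat q.2.2 (σ.valuesOn (ν none) (ν none + τ))
    rw [hvals, σ.valuesOn_eq_of_inOneCell hq.2 hq'.2 hμ hν hμ' hν']

theorem exists_path_represents {σ : Signal X} {A : TSA X L C} {π : List (SymState X L C)}
    (hπ : IsPath (symStep σ A) π) (hadm : ∀ q ∈ π, Admissible σ q) {q : SymState X L C}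
    (hq : π.getLast? = some q) {ν : ClockT C → ℝ} (hν : ν ∈ q.2.1) :
    ∃ ψ : List (WState X L C), IsPath (wttsStep σ A) ψ ∧ List.Forall₂ Represents π ψ ∧
      ψ.getLast? = some (toWState q ν) := by
  induction π with
  | nil => simp at hq
  | cons q₀ π ih =>
    cases π with
    | nil =>
      obtain rfl : q₀ = q := by simpa using hq
      exact ⟨[toWState q₀ ν], List.isChain_singleton _, .cons ⟨ν, hν, rfl⟩ .nil, rfl⟩
    | cons q₁ π =>
      obtain ⟨hstep, hπ⟩ := List.isChain_cons_cons.mp hπ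
      obtain ⟨ψ, hψ, hrep, hlast⟩ :=
        ih hπ (fun p hp => hadm p (List.mem_cons_of_mem _ hp)) hq
      cases hrep with | cons hrep₁ hrep => ?_
      obtain ⟨ν₁, hν₁, rfl⟩ := hrep₁
      obtain ⟨ν₀, hν₀, hstep'⟩ := exists_wttsStep_of_symStep hstep
        (hadm q₀ List.mem_cons_self) (hadm q₁ (by simp)) hν₁
      exact ⟨_, List.isChain_cons_cons.mpr ⟨hstep', hψ⟩,
        .cons ⟨ν₀, hν₀, rfl⟩ (.cons ⟨ν₁, hν₁, rfl⟩ hrep), hlast⟩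

theorem exists_accepting_path_represents {σ : Signal X} {A : TSA X L C}
    {π : List (SymState X L C)} (hπ : π ∈ PathsBetween (symStep σ A) (symQ0 A) (symQF σ A)) :
    ∃ ψ ∈ PathsBetween (wttsStep σ A) (wttsQ0 A) (wttsQF σ A), List.Forall₂ Represents π ψ := by
  have hadm := admissible_of_mem_pathsBetween hπ
  obtain ⟨hchain, ⟨q₀, hq₀, hhead⟩, ⟨q, ⟨-, hLF, hε, ν, hν, hdur⟩, hlast⟩⟩ := hπ
  obtain ⟨ψ, hψ, hrep, hψlast⟩ := exists_path_represents hchain hadm hlast hν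
  obtain ⟨π, rfl⟩ := List.head?_eq_some_iff.mp hhead
  cases hrep with | cons hrep₀ hrep => ?_
  obtain ⟨ν₀, hν₀, rfl⟩ := hrep₀
  rw [hq₀.2.1, Set.mem_singleton_iff] at hν₀
  subst hν₀
  refine ⟨_, ⟨hψ, ⟨_, ⟨hq₀.1, rfl, rfl, hq₀.2.2⟩, rfl⟩, ⟨toWState q ν, ?_, hψlast⟩⟩,
    .cons ⟨_, hq₀.2.1 ▸ rfl, rfl⟩ hrep⟩
  exact ⟨hLF, fun c => (hadm q (List.mem_of_getLast? hlast)).1 ν hν (some c), hdur, hε⟩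

end Realization

theorem pathVal_eq_of_forall₂ {Q Q' S : Type} [CSemiring S] [CompleteCSemiring S]
    {R : Q → Q' → Prop} {w : Q → Q → S} {w' : Q' → Q' → S}
    (hw : ∀ ⦃a b a' b'⦄, R a a' → R b b' → w a b = w' a' b') :
    ∀ {l l'}, List.Forall₂ R l l' → pathVal w l = pathVal w' l'
  | _, _, .nil => rfl
  | _, _, .cons _ .nil => rfl
  | _, _, .cons h₁ (.cons h₂ h) =>
    congrArg₂ CSemiring.mul (hw h₁ h₂) (pathVal_eq_of_forall₂ hw (.cons h₂ h))

theorem symWeight_eq_wttsWeight {X L C S : Type} [CSemiring S] [CompleteCSemiring S]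
    (W : TSWA X L C S) ⦃q q' : SymState X L C⦄ ⦃p p' : WState X L C⦄
    (hp : Represents q p) (hp' : Represents q' p') : symWeight W q q' = wttsWeight W p p' := by
  obtain ⟨ν, -, rfl⟩ := hp
  obtain ⟨ν', -, rfl⟩ := hp'
  rfl

theorem finite_isChain_of_length {Q : Type} {step : Q → Q → Prop}
    (hstep : ∀ q, {q' | step q q'}.Finite) (n : ℕ) {s : Set Q} (hs : s.Finite) :
    {π : List Q | π.length = n ∧ π.IsChain step ∧ ∀ q ∈ π.head?, q ∈ s}.Finite := by
  induction n generalizing s with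
  | zero => exact (Set.finite_singleton []).subset fun π hπ => List.length_eq_zero_iff.mp hπ.1
  | succ n ih =>
    refine (hs.biUnion fun q _ => (ih (hstep q)).image (List.cons q)).subset ?_
    rintro (_ | ⟨q, π⟩) ⟨hlen, hchain, hhead⟩
    · simp at hlen
    · rw [List.isChain_cons] at hchain
      exact Set.mem_biUnion (hhead q rfl) ⟨π, ⟨by simpa using hlen, hchain.2, hchain.1⟩, rfl⟩

section Finiteness

variable {X L C : Type}

theorem finite_symStep_succ (σ : Signal X) (A : TSA X L C) (q : SymState X L C) :
    {q' | symStep σ A q q'}.Finite := by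
  have hdiscrete := A.Δ_finite.image fun d : L × Guard C × Set C × L =>
    ((d.2.2.2, {ν' | ∃ ν ∈ q.2.1, guardSat (fun c => ν (some c)) d.2.1 ∧
      ν' = symResetVal ν d.2.2.1}, []) : SymState X L C)
  have hzones : (⋃ i ∈ Set.Icc 1 σ.len, ({upClosure q.2.1 ∩ {ν | ν none = σ.pref i},
      upClosure q.2.1 ∩ {ν | σ.pref (i - 1) < ν none ∧ ν none < σ.pref i}} :
      Set (Set (ClockT C → ℝ)))).Finite :=
    (Set.finite_Icc 1 σ.len).biUnion fun _ _ => (Set.finite_singleton _).insert _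
  have hwords := (List.finite_toSet (List.range σ.len).sublists).image
    fun l => absCat q.2.2 (List.destutter (· ≠ ·) (l.map σ.val))
  refine (hdiscrete.union ((hzones.prod hwords).image fun p => (q.1, p.1, p.2))).subset ?_
  rintro q' ⟨-, -, ⟨g, ρ, hΔ, hZ', -, hnil⟩ | ⟨hl, ⟨μ, -, μ', -, hvals⟩, i, h1i, hi, hZ'⟩⟩
  · refine Or.inl ⟨(q.1, g, ρ, q'.1), hΔ, ?_⟩
    dsimp only
    rw [← hZ', ← hnil]
  · refine Or.inr ⟨(q'.2.1, q'.2.2), ⟨Set.mem_biUnion ⟨h1i, hi⟩ ?_, ?_⟩, by rw [hl]⟩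
    · rcases hZ' with h | h <;> rw [h] <;> simp
    · exact ⟨_, List.mem_sublists.mpr List.filter_sublist, hvals.symm⟩

theorem finite_symQ0 [Finite L] (A : TSA X L C) : (symQ0 (X := X) A).Finite := by
  refine ((Set.finite_univ (α := L)).image fun l =>
    ((l, {zeroValT}, []) : SymState X L C)).subset ?_
  rintro q ⟨-, hZ, hε⟩
  exact ⟨q.1, trivial, by rw [← hZ, ← hε]⟩

end Finiteness

theorem statement15_general {X L C S : Type} [Finite L]
    [CSemiring S] [CompleteCSemiring S]
    (W : TSWA X L C S) (σ : Signal X)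
    (hidem : Idem S) :
    csLe (symTraceValue σ W) (traceValue σ W) := by
  choose F hF using
    fun π : PathsBetween (symStep σ W.toTSA) (symQ0 W.toTSA) (symQF σ W.toTSA) =>
      exists_accepting_path_represents π.2
  refine csLe_iSum_of_finiteToOne hidem (fun π => ⟨F π, (hF π).1⟩) (fun ψ => ?_)
    fun π => pathVal_eq_of_forall₂ (symWeight_eq_wttsWeight W) (hF π).2
  refine ((finite_isChain_of_length (finite_symStep_succ σ W.toTSA) ψ.1.length
    (finite_symQ0 W.toTSA)).preimage Subtype.val_injective.injOn).subset ?_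
  rintro ⟨π, hchain, ⟨q₀, hq₀, hhead⟩, -⟩ rfl
  refine ⟨(hF _).2.length_eq, hchain, fun q hq => ?_⟩
  obtain rfl : q₀ = q := Option.some_injective _ (hhead.symm.trans hq)
  exact hq₀

/-- Let `σ` be a signal with `aᵢ ≠ a_{i+1}`, `W` a TSWA over `ℝ` and
a complete semiring `S`, `S` the WTTS and `S^sym` the WSTTS of `σ` and `W`. If the
semiring is idempotent then `α^sym(S^sym) ⪯ α(S)` in the canonical order. -/
theorem statement15 {X L C S : Type} [Finite X] [Finite L] [Finite C]
    [CSemiring S] [CompleteCSemiring S]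
    (W : TSWA X L C S) (σ : Signal X)
    (hstutter : (σ.entries.map Prod.fst).Chain' (· ≠ ·))
    (hidem : Idem S) :
    csLe (symTraceValue σ W) (traceValue σ W) :=
  statement15_general W σ hidem

end QTPM
end
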